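/- arXiv:math/0407325 — 4 statements merged into one kernel-verified Lean document; each statement's English description precedes it below -/
import Mathlib

section
/- (Lemma 3.2.) For every smooth regular closed plane curve γ one has 1/L ≤ (1/(4π²)) ∫_γ κ² ds, i.e. 4π² ≤ L · ∫_γ κ² ds. -/
open Real MeasureTheory

noncomputable section

abbrev E2 : Type := EuclideanSpace ℝ (Fin 2)

/-- Counterclockwise rotation by `π/2`: `R(a,b) = (-b,a)`. -/
def rot (v : E2) : E2 := WithLp.toLp 2 ![-(v 1), v 0]

/-- Arclength derivative `∂ₛ = |γ'|⁻¹ ∂ₓ` along `γ`. -/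
def aD {F : Type*} [NormedAddCommGroup F] [NormedSpace ℝ F]
    (γ : ℝ → E2) (f : ℝ → F) : ℝ → F :=
  fun x => (‖deriv γ x‖)⁻¹ • deriv f x

/-- Iterated arclength derivative `∂ₛⁿ` on scalar functions. -/
def aDn (γ : ℝ → E2) (n : ℕ) : (ℝ → ℝ) → (ℝ → ℝ) :=
  (fun g => aD γ g)^[n]

/-- Unit tangent `τ = ∂ₛ γ`. -/
def tau (γ : ℝ → E2) : ℝ → E2 := aD γ γ

/-- Unit normal `ν = R τ`. -/
def nu (γ : ℝ → E2) : ℝ → E2 := fun x => rot (tau γ x)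

/-- Curvature `κ = ⟨∂ₛ τ, ν⟩`. -/
def curv (γ : ℝ → E2) : ℝ → ℝ :=
  fun x => (inner ℝ (aD γ (tau γ) x) (nu γ x) : ℝ)

/-- Integration with respect to arclength: `∫_γ f ds = ∫₀^{2π} f(x) |γ'(x)| dx`. -/
def Ig (γ : ℝ → E2) (f : ℝ → ℝ) : ℝ :=
  ∫ x in (0:ℝ)..(2 * π), f x * ‖deriv γ x‖

/-- Length of `γ`. -/
def len (γ : ℝ → E2) : ℝ := Ig γ fun _ => 1

/-- `γ` is a smooth regular closed plane curve (2π-periodic). -/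
structure IsClosedCurve (γ : ℝ → E2) : Prop where
  smooth : ContDiff ℝ (⊤ : ℕ∞) γ
  periodic : Function.Periodic γ (2 * π)
  regular : ∀ x, deriv γ x ≠ 0

namespace L32
variable (γ : ℝ → E2)
def pp : ℝ → ℝ := fun x => tau γ x 0
def qq : ℝ → ℝ := fun x => tau γ x 1
def kk : ℝ → ℝ := fun x => -(deriv (pp γ) x) * qq γ x + (deriv (qq γ) x) * pp γ x
def th : ℝ → ℝ := fun x => Complex.arg ⟨pp γ 0, qq γ 0⟩ + ∫ t in (0:ℝ)..x, kk γ t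

variable {γ}

theorem smooth_v (hγ : IsClosedCurve γ) : ContDiff ℝ (⊤:ℕ∞) (deriv γ) :=
  (contDiff_infty_iff_deriv.mp (hγ.smooth.of_le (by simp))).2

theorem rpos (hγ : IsClosedCurve γ) (x : ℝ) : 0 < ‖deriv γ x‖ :=
  norm_pos_iff.mpr (hγ.regular x)

theorem smooth_tau (hγ : IsClosedCurve γ) : ContDiff ℝ (⊤:ℕ∞) (tau γ) := by
  have : tau γ = fun x => (‖deriv γ x‖)⁻¹ • deriv γ x := rfl
  rw [this]
  rw [contDiff_iff_contDiffAt]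
  intro x
  exact (((smooth_v hγ).contDiffAt.norm ℝ (hγ.regular x)).inv
    (ne_of_gt (rpos hγ x))).smul (smooth_v hγ).contDiffAt

theorem tau_apply (x : ℝ) (i : Fin 2) :
    tau γ x i = (‖deriv γ x‖)⁻¹ * deriv γ x i := rfl

theorem deriv_comp_apply {f : ℝ → E2} {x : ℝ} (hf : DifferentiableAt ℝ f x) (i : Fin 2) :
    deriv (fun y => f y i) x = deriv f x i := by
  have := ((EuclideanSpace.proj (𝕜 := ℝ) i).hasFDerivAt.comp_hasDerivAt x hf.hasDerivAt).deriv
  exact this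

theorem norm_sq_eq (w : E2) : ‖w‖^2 = (w 0)^2 + (w 1)^2 := by
  rw [EuclideanSpace.norm_eq, Real.sq_sqrt (by positivity)]
  simp [Fin.sum_univ_two, sq_abs]

theorem unit_pq (hγ : IsClosedCurve γ) (x : ℝ) : pp γ x ^ 2 + qq γ x ^ 2 = 1 := by
  have h2 := norm_sq_eq (deriv γ x)
  have hr := rpos hγ x
  simp only [pp, qq, tau_apply]
  field_simp
  linarith

theorem smooth_pp (hγ : IsClosedCurve γ) : ContDiff ℝ (⊤:ℕ∞) (pp γ) :=
  ((EuclideanSpace.proj (𝕜 := ℝ) (0 : Fin 2)).contDiff).comp (smooth_tau hγ)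

theorem smooth_qq (hγ : IsClosedCurve γ) : ContDiff ℝ (⊤:ℕ∞) (qq γ) :=
  ((EuclideanSpace.proj (𝕜 := ℝ) (1 : Fin 2)).contDiff).comp (smooth_tau hγ)

theorem cont_dpp (hγ : IsClosedCurve γ) : Continuous (deriv (pp γ)) :=
  ((contDiff_infty_iff_deriv.mp (smooth_pp hγ)).2).continuous

theorem cont_dqq (hγ : IsClosedCurve γ) : Continuous (deriv (qq γ)) :=
  ((contDiff_infty_iff_deriv.mp (smooth_qq hγ)).2).continuous

theorem k_cont (hγ : IsClosedCurve γ) : Continuous (kk γ) := by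
  unfold kk
  exact (((cont_dpp hγ).neg.mul ((smooth_qq hγ).continuous)).add
    ((cont_dqq hγ).mul ((smooth_pp hγ).continuous)))

theorem pq_sum (hγ : IsClosedCurve γ) (x : ℝ) :
    pp γ x * deriv (pp γ) x + qq γ x * deriv (qq γ) x = 0 := by
  have hpd : DifferentiableAt ℝ (pp γ) x := ((smooth_pp hγ).differentiable (by norm_cast)).differentiableAt
  have hqd : DifferentiableAt ℝ (qq γ) x := ((smooth_qq hγ).differentiable (by norm_cast)).differentiableAt
  have hD : HasDerivAt (fun y => pp γ y ^ 2 + qq γ y ^ 2)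
      ((2 : ℕ) * pp γ x ^ 1 * deriv (pp γ) x + (2 : ℕ) * qq γ x ^ 1 * deriv (qq γ) x) x :=
    (hpd.hasDerivAt.pow 2).add (hqd.hasDerivAt.pow 2)
  have hc : (fun y => pp γ y ^ 2 + qq γ y ^ 2) = fun _ => (1:ℝ) := funext (unit_pq hγ)
  have h0 : deriv (fun y => pp γ y ^ 2 + qq γ y ^ 2) x = 0 := by rw [hc]; simp
  have := hD.deriv
  rw [h0] at this
  push_cast at this
  nlinarith [this]

theorem ode_p (hγ : IsClosedCurve γ) (x : ℝ) :
    deriv (pp γ) x = -(kk γ x) * qq γ x := by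
  have hu := unit_pq hγ x
  have hs := pq_sum hγ x
  simp only [kk]
  linear_combination (-(deriv (pp γ) x)) * hu + pp γ x * hs

theorem ode_q (hγ : IsClosedCurve γ) (x : ℝ) :
    deriv (qq γ) x = kk γ x * pp γ x := by
  have hu := unit_pq hγ x
  have hs := pq_sum hγ x
  simp only [kk]
  linear_combination (-(deriv (qq γ) x)) * hu + qq γ x * hs

theorem curv_eq (hγ : IsClosedCurve γ) (x : ℝ) :
    curv γ x = kk γ x / ‖deriv γ x‖ := by
  have htd : DifferentiableAt ℝ (tau γ) x := ((smooth_tau hγ).differentiable (by norm_cast)).differentiableAt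
  have h0 : deriv (tau γ) x 0 = deriv (pp γ) x := (deriv_comp_apply htd 0).symm
  have h1 : deriv (tau γ) x 1 = deriv (qq γ) x := (deriv_comp_apply htd 1).symm
  have hr := rpos hγ x
  simp only [curv, nu, aD, rot, PiLp.inner_apply, RCLike.inner_apply, conj_trivial,
    Fin.sum_univ_two, PiLp.smul_apply, smul_eq_mul, Matrix.cons_val_zero, Matrix.cons_val_one,
    Matrix.head_cons]
  rw [h0, h1]
  simp only [kk, pp, qq]
  field_simp

theorem th_hasDeriv (hγ : IsClosedCurve γ) (x : ℝ) : HasDerivAt (th γ) (kk γ x) x := by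
  apply HasDerivAt.const_add
  exact intervalIntegral.integral_hasDerivAt_right
    ((k_cont hγ).intervalIntegrable _ _)
    ((k_cont hγ).stronglyMeasurableAtFilter _ _)
    (k_cont hγ).continuousAt

theorem th_cont (hγ : IsClosedCurve γ) : Continuous (th γ) :=
  continuous_iff_continuousAt.mpr fun x => (th_hasDeriv hγ x).continuousAt

theorem th_sub (hγ : IsClosedCurve γ) (x y : ℝ) :
    th γ y - th γ x = ∫ t in x..y, kk γ t := by
  simp only [th]
  rw [add_sub_add_left_eq_sub,
    intervalIntegral.integral_interval_sub_left ((k_cont hγ).intervalIntegrable _ _)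
      ((k_cont hγ).intervalIntegrable _ _)]

theorem th_zero (hγ : IsClosedCurve γ) : th γ 0 = Complex.arg ⟨pp γ 0, qq γ 0⟩ := by
  simp [th]

theorem pq_eq (hγ : IsClosedCurve γ) (x : ℝ) :
    pp γ x = Real.cos (th γ x) ∧ qq γ x = Real.sin (th γ x) := by
  set h : ℝ → ℝ := fun y => pp γ y * Real.cos (th γ y) + qq γ y * Real.sin (th γ y) with hh_def
  have hh : ∀ y, HasDerivAt h 0 y := by
    intro y
    have hpd : HasDerivAt (pp γ) (deriv (pp γ) y) y :=
      (((smooth_pp hγ).differentiable (by norm_cast)).differentiableAt).hasDerivAt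
    have hqd : HasDerivAt (qq γ) (deriv (qq γ) y) y :=
      (((smooth_qq hγ).differentiable (by norm_cast)).differentiableAt).hasDerivAt
    have hcos : HasDerivAt (fun z => Real.cos (th γ z)) (-Real.sin (th γ y) * kk γ y) y :=
      (th_hasDeriv hγ y).cos
    have hsin : HasDerivAt (fun z => Real.sin (th γ z)) (Real.cos (th γ y) * kk γ y) y :=
      (th_hasDeriv hγ y).sin
    have := (hpd.mul hcos).add (hqd.mul hsin)
    convert this using 1
    · rfl
    · rfl
    · rfl
    rw [ode_p hγ y, ode_q hγ y]
    ring
  have hconst := is_const_of_deriv_eq_zero (fun y => (hh y).differentiableAt)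
    (fun y => (hh y).deriv) x 0
  have hz : (⟨pp γ 0, qq γ 0⟩ : ℂ) ≠ 0 := by
    intro h0
    have h1 : pp γ 0 = 0 := congrArg Complex.re h0
    have h2 : qq γ 0 = 0 := congrArg Complex.im h0
    have := unit_pq hγ 0
    rw [h1, h2] at this; norm_num at this
  have habs : ‖(⟨pp γ 0, qq γ 0⟩ : ℂ)‖ = 1 := by
    rw [Complex.norm_def, Complex.normSq_mk]
    have := unit_pq hγ 0
    rw [show pp γ 0 * pp γ 0 + qq γ 0 * qq γ 0 = pp γ 0 ^ 2 + qq γ 0 ^ 2 by ring, this,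
      Real.sqrt_one]
  have h0val : h 0 = 1 := by
    have hc : Real.cos (th γ 0) = pp γ 0 := by
      rw [th_zero hγ, Complex.cos_arg hz, habs]; simp
    have hs : Real.sin (th γ 0) = qq γ 0 := by
      rw [th_zero hγ, Complex.sin_arg, habs]; simp
    simp only [hh_def, hc, hs]
    have := unit_pq hγ 0
    nlinarith [this]
  have hx : h x = 1 := hconst.trans h0val
  have hu := unit_pq hγ x
  have htrig := Real.sin_sq_add_cos_sq (th γ x)
  simp only [hh_def] at hx
  constructor
  · nlinarith [sq_nonneg (pp γ x - Real.cos (th γ x)), sq_nonneg (qq γ x - Real.sin (th γ x))]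
  · nlinarith [sq_nonneg (pp γ x - Real.cos (th γ x)), sq_nonneg (qq γ x - Real.sin (th γ x))]

theorem v_comp (hγ : IsClosedCurve γ) (x : ℝ) (i : Fin 2) :
    deriv γ x i = ‖deriv γ x‖ * tau γ x i := by
  rw [tau_apply]
  rw [mul_inv_cancel_left₀ (ne_of_gt (rpos hγ x))]

theorem integral_v_zero (hγ : IsClosedCurve γ) (i : Fin 2) :
    ∫ x in (0:ℝ)..(2*π), deriv γ x i = 0 := by
  have hdγ : Differentiable ℝ γ := hγ.smooth.differentiable (by norm_cast)
  have hdi : ∀ x, DifferentiableAt ℝ (fun y => γ y i) x := fun x =>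
    (EuclideanSpace.proj (𝕜 := ℝ) i).differentiableAt.comp x (hdγ x)
  have hder : deriv (fun y => γ y i) = fun x => deriv γ x i :=
    funext fun x => deriv_comp_apply (hdγ x) i
  have hcont : Continuous fun x => deriv γ x i :=
    ((EuclideanSpace.proj (𝕜 := ℝ) i).continuous).comp (smooth_v hγ).continuous
  have := intervalIntegral.integral_deriv_eq_sub (f := fun y => γ y i)
    (a := 0) (b := 2*π) (fun x _ => hdi x)
    (by rw [hder]; exact hcont.intervalIntegrable _ _)
  rw [hder] at this
  rw [this]
  have hp : γ (2*π) = γ 0 := by simpa using hγ.periodic 0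
  simp only [hp, sub_self]

theorem tau_periodic (hγ : IsClosedCurve γ) : Function.Periodic (tau γ) (2*π) := by
  intro x
  have hv : deriv γ (x + 2*π) = deriv γ x := by
    have : γ ∘ (fun y => y + 2*π) = γ := funext fun y => hγ.periodic y
    conv_rhs => rw [← this]
    rw [show γ ∘ (fun y => y + 2*π) = fun y => γ (y + 2*π) from rfl]
    have hd : ∀ y, HasDerivAt (fun z => γ (z + 2*π)) (deriv γ (y + 2*π)) y := by
      intro y
      have h1 : HasDerivAt γ (deriv γ (y + 2*π)) (y + 2*π) :=
        ((hγ.smooth.differentiable (by norm_cast)) _).hasDerivAt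
      have h2 := HasDerivAt.scomp (h := fun z => z + 2*π) y h1 (by simpa using (hasDerivAt_id y).add_const (2*π))
      rw [one_smul] at h2
      exact h2
    exact ((hd x).deriv).symm
  show tau γ (x + 2*π) = tau γ x
  simp only [tau, aD, hv]

theorem pq_periodic (hγ : IsClosedCurve γ) :
    pp γ (2*π) = pp γ 0 ∧ qq γ (2*π) = qq γ 0 := by
  have h := tau_periodic hγ 0
  simp only [zero_add] at h
  exact ⟨congrArg (fun v => v 0) h, congrArg (fun v => v 1) h⟩

theorem cont_r (hγ : IsClosedCurve γ) : Continuous (fun x => ‖deriv γ x‖) :=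
  (smooth_v hγ).continuous.norm

theorem spread (hγ : IsClosedCurve γ) {a b : ℝ}
    (hmax : IsMaxOn (th γ) (Set.Icc 0 (2*π)) a) (hmin : IsMinOn (th γ) (Set.Icc 0 (2*π)) b) :
    π ≤ th γ a - th γ b := by
  by_contra hlt
  push_neg at hlt
  set c := (th γ a + th γ b)/2 with hc
  have hpos : ∀ x ∈ Set.Icc (0:ℝ) (2*π), 0 < Real.cos (th γ x - c) * ‖deriv γ x‖ := by
    intro x hx
    have h1 : th γ x ≤ th γ a := hmax hx
    have h2 : th γ b ≤ th γ x := hmin hx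
    have hmem : th γ x - c ∈ Set.Ioo (-(π/2)) (π/2) := by
      constructor
      · simp only [hc]; linarith
      · simp only [hc]; linarith
    exact mul_pos (Real.cos_pos_of_mem_Ioo hmem) (rpos hγ x)
  have hcont : Continuous fun x => Real.cos (th γ x - c) * ‖deriv γ x‖ :=
    (Real.continuous_cos.comp ((th_cont hγ).sub continuous_const)).mul (cont_r hγ)
  have hI : 0 < ∫ x in (0:ℝ)..2*π, Real.cos (th γ x - c) * ‖deriv γ x‖ :=
    intervalIntegral.intervalIntegral_pos_of_pos_on (hcont.intervalIntegrable _ _)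
      (fun x hx => hpos x ⟨le_of_lt hx.1, le_of_lt hx.2⟩) (by positivity)
  have hv0 : Continuous fun x => deriv γ x 0 :=
    ((EuclideanSpace.proj (𝕜 := ℝ) (0 : Fin 2)).continuous).comp (smooth_v hγ).continuous
  have hv1 : Continuous fun x => deriv γ x 1 :=
    ((EuclideanSpace.proj (𝕜 := ℝ) (1 : Fin 2)).continuous).comp (smooth_v hγ).continuous
  have heq : ∀ x, Real.cos (th γ x - c) * ‖deriv γ x‖
      = Real.cos c * (deriv γ x 0) + Real.sin c * (deriv γ x 1) := by
    intro x
    rw [v_comp hγ x 0, v_comp hγ x 1]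
    have hp := (pq_eq hγ x).1
    have hq := (pq_eq hγ x).2
    rw [Real.cos_sub]
    rw [show tau γ x 0 = pp γ x from rfl, show tau γ x 1 = qq γ x from rfl, hp, hq]
    ring
  have hzero : (∫ x in (0:ℝ)..2*π, Real.cos (th γ x - c) * ‖deriv γ x‖) = 0 := by
    rw [intervalIntegral.integral_congr (g := fun x =>
        Real.cos c * (deriv γ x 0) + Real.sin c * (deriv γ x 1)) (fun x _ => heq x)]
    rw [intervalIntegral.integral_add (f := fun x => Real.cos c * deriv γ x 0) (g := fun x => Real.sin c * deriv γ x 1) ((continuous_const.mul hv0).intervalIntegrable _ _)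
      ((continuous_const.mul hv1).intervalIntegrable _ _),
      intervalIntegral.integral_const_mul, intervalIntegral.integral_const_mul,
      integral_v_zero hγ 0, integral_v_zero hγ 1]
    ring
  linarith

theorem fenchel (hγ : IsClosedCurve γ) : 2*π ≤ ∫ x in (0:ℝ)..2*π, |kk γ x| := by
  have hkai : ∀ (x y : ℝ), IntervalIntegrable (fun t => |kk γ t|) volume x y :=
    fun x y => ((k_cont hγ).abs).intervalIntegrable x y
  have habs : ∀ {x y : ℝ}, x ≤ y → |th γ y - th γ x| ≤ ∫ t in x..y, |kk γ t| := by
    intro x y hxy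
    rw [th_sub hγ x y]
    exact intervalIntegral.abs_integral_le_integral_abs hxy
  have hcos1 : Real.cos (th γ (2*π) - th γ 0) = 1 := by
    rw [Real.cos_sub]
    have h2 := pq_eq hγ (2*π); have h0 := pq_eq hγ 0
    have hper := pq_periodic hγ
    rw [← h2.1, ← h2.2, ← h0.1, ← h0.2, hper.1, hper.2]
    have := unit_pq hγ 0; nlinarith
  obtain ⟨n, hn⟩ := (Real.cos_eq_one_iff _).mp hcos1
  rcases eq_or_ne n 0 with hn0 | hn0
  · have hpereq : th γ (2*π) = th γ 0 := by
      have : th γ (2*π) - th γ 0 = 0 := by rw [← hn, hn0]; simp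
      linarith
    obtain ⟨a, haI, hamax⟩ := (isCompact_Icc (a := (0:ℝ)) (b := 2*π)).exists_isMaxOn
      (Set.nonempty_Icc.mpr (by positivity)) (th_cont hγ).continuousOn
    obtain ⟨b, hbI, hbmin⟩ := (isCompact_Icc (a := (0:ℝ)) (b := 2*π)).exists_isMinOn
      (Set.nonempty_Icc.mpr (by positivity)) (th_cont hγ).continuousOn
    have hkey := spread hγ hamax hbmin
    have h0mem : (0:ℝ) ∈ Set.Icc (0:ℝ) (2*π) := ⟨le_refl _, by positivity⟩
    have hA0 : th γ 0 ≤ th γ a := hamax h0mem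
    have hB0 : th γ b ≤ th γ 0 := hbmin h0mem
    have hsplit : ∀ x₁ x₂ : ℝ, 0 ≤ x₁ → x₁ ≤ x₂ → x₂ ≤ 2*π →
        |th γ x₁ - th γ 0| + |th γ x₂ - th γ x₁| + |th γ (2*π) - th γ x₂|
          ≤ ∫ t in (0:ℝ)..2*π, |kk γ t| := by
      intro x₁ x₂ h1 h2 h3
      have e2 : (∫ t in (0:ℝ)..x₁, |kk γ t|) + (∫ t in x₁..x₂, |kk γ t|)
          = ∫ t in (0:ℝ)..x₂, |kk γ t| :=
        intervalIntegral.integral_add_adjacent_intervals (hkai _ _) (hkai _ _)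
      have e3 : (∫ t in (0:ℝ)..x₂, |kk γ t|) + (∫ t in x₂..2*π, |kk γ t|)
          = ∫ t in (0:ℝ)..2*π, |kk γ t| :=
        intervalIntegral.integral_add_adjacent_intervals (hkai _ _) (hkai _ _)
      have b1 := habs h1
      have b2 := habs h2
      have b3 := habs h3
      linarith
    rcases le_total a b with hab | hab
    · have hS := hsplit a b haI.1 hab hbI.2
      have l1 : th γ a - th γ 0 ≤ |th γ a - th γ 0| := le_abs_self _
      have l2 : th γ a - th γ b ≤ |th γ b - th γ a| := by
        rw [abs_sub_comm]; exact le_abs_self _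
      have l3 : th γ 0 - th γ b ≤ |th γ (2*π) - th γ b| := by
        rw [hpereq]; exact le_abs_self _
      linarith
    · have hS := hsplit b a hbI.1 hab haI.2
      have l1 : th γ 0 - th γ b ≤ |th γ b - th γ 0| := by
        rw [abs_sub_comm]; exact le_abs_self _
      have l2 : th γ a - th γ b ≤ |th γ a - th γ b| := le_abs_self _
      have l3 : th γ a - th γ 0 ≤ |th γ (2*π) - th γ a| := by
        rw [hpereq, abs_sub_comm]; exact le_abs_self _
      linarith
  · have h1 : (1:ℝ) ≤ |(n:ℝ)| := by
      have := Int.one_le_abs hn0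
      exact_mod_cast this
    have h2 : 2*π ≤ |th γ (2*π) - th γ 0| := by
      rw [← hn, abs_mul]
      have hp : |2*π| = 2*π := abs_of_pos (by positivity)
      rw [hp]
      nlinarith [pi_pos]
    calc 2*π ≤ |th γ (2*π) - th γ 0| := h2
      _ ≤ _ := habs (by positivity)

theorem cauchy (hγ : IsClosedCurve γ) :
    (∫ x in (0:ℝ)..2*π, |kk γ x|)^2 ≤
    (∫ x in (0:ℝ)..2*π, (kk γ x)^2 / ‖deriv γ x‖) * (∫ x in (0:ℝ)..2*π, ‖deriv γ x‖) := by
  set A := ∫ x in (0:ℝ)..2*π, (kk γ x)^2 / ‖deriv γ x‖ with hA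
  set B := ∫ x in (0:ℝ)..2*π, |kk γ x| with hB
  set C := ∫ x in (0:ℝ)..2*π, ‖deriv γ x‖ with hCdef
  have hC : 0 < C :=
    intervalIntegral.intervalIntegral_pos_of_pos_on ((cont_r hγ).intervalIntegrable _ _)
      (fun x _ => rpos hγ x) (by positivity)
  have hcont2 : Continuous fun x => (kk γ x)^2 / ‖deriv γ x‖ :=
    ((k_cont hγ).pow 2).div (cont_r hγ) (fun x => ne_of_gt (rpos hγ x))
  have hquad : ∀ t : ℝ, 0 ≤ A - 2*t*B + t^2*C := by
    intro t
    have hnn : 0 ≤ ∫ x in (0:ℝ)..2*π, (|kk γ x| / ‖deriv γ x‖ - t)^2 * ‖deriv γ x‖ :=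
      intervalIntegral.integral_nonneg (by positivity) (fun x _ => by positivity)
    have hrw : ∀ x, (|kk γ x| / ‖deriv γ x‖ - t)^2 * ‖deriv γ x‖
        = ((kk γ x)^2 / ‖deriv γ x‖ - 2*t*|kk γ x|) + t^2 * ‖deriv γ x‖ := by
      intro x
      have hr := rpos hγ x
      have hs : |kk γ x|^2 = (kk γ x)^2 := sq_abs _
      field_simp
      nlinarith [hs]
    rw [intervalIntegral.integral_congr (g := fun x =>
        ((kk γ x)^2 / ‖deriv γ x‖ - 2*t*|kk γ x|) + t^2 * ‖deriv γ x‖) (fun x _ => hrw x)] at hnn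
    rw [intervalIntegral.integral_add (f := fun x => (kk γ x)^2 / ‖deriv γ x‖ - 2*t*|kk γ x|) (g := fun x => t^2 * ‖deriv γ x‖)
        ((hcont2.sub (continuous_const.mul (k_cont hγ).abs)).intervalIntegrable _ _)
        ((continuous_const.mul (cont_r hγ)).intervalIntegrable _ _),
      intervalIntegral.integral_sub (f := fun x => (kk γ x)^2 / ‖deriv γ x‖) (g := fun x => 2*t*|kk γ x|) (hcont2.intervalIntegrable _ _)
        ((continuous_const.mul (k_cont hγ).abs).intervalIntegrable _ _),
      intervalIntegral.integral_const_mul, intervalIntegral.integral_const_mul] at hnn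
    linarith
  have h := hquad (B/C)
  have h2 : 0 ≤ C * (A - 2*(B/C)*B + (B/C)^2*C) := mul_nonneg hC.le h
  have h3 : C * (A - 2*(B/C)*B + (B/C)^2*C) = C*A - B^2 := by
    field_simp
    ring
  nlinarith

end L32

/-- Lemma 3.2: `1/L ≤ (1/(4π²)) ∫_γ κ² ds`, i.e. `4π² ≤ L ⬝ ∫_γ κ² ds`. -/
theorem lemma_3_2 (γ : ℝ → E2) (hγ : IsClosedCurve γ) :
    4 * π ^ 2 ≤ len γ * Ig γ (fun x => (curv γ x) ^ 2) := by
  have hC : len γ = ∫ x in (0:ℝ)..2*π, ‖deriv γ x‖ := by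
    simp [len, Ig]
  have hA : Ig γ (fun x => (curv γ x) ^ 2)
      = ∫ x in (0:ℝ)..2*π, (L32.kk γ x)^2 / ‖deriv γ x‖ := by
    rw [Ig]
    apply intervalIntegral.integral_congr
    intro x _
    simp only []
    rw [L32.curv_eq hγ x]
    have hr := L32.rpos hγ x
    field_simp
  have hF := L32.fenchel hγ
  have hCS := L32.cauchy hγ
  rw [hC, hA]
  nlinarith [hF, hCS, Real.pi_pos]
end
end

section
/- (Lemma 3.4, evolution of the curvature.) At every point of ℝ × [0,T) the curvature satisfies ∂ₜκ = −∂ₛ²E_ε − κ² E_ε = ∂ₛ²κ + κ³ − 2ε ∂ₛ⁴κ − 6ε κ (∂ₛκ)² − 5ε κ² ∂ₛ²κ − ε κ⁵. -/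
open Real MeasureTheory
open scoped ContDiff
set_option maxHeartbeats 1600000

noncomputable section

/-- The curve at time `t` of a family. -/
def curveAt (γ : ℝ → ℝ → E2) (t : ℝ) : ℝ → E2 := fun x => γ x t

/-- First variation `E_ε = -κ + 2ε ∂ₛ²κ + ε κ³`. -/
def Eeps (ε : ℝ) (c : ℝ → E2) : ℝ → ℝ :=
  fun x => -(curv c x) + 2 * ε * aDn c 2 (curv c) x + ε * (curv c x) ^ 3

section helpers

lemma inner_ex (u v : E2) : (inner ℝ u v : ℝ) = u 0 * v 0 + u 1 * v 1 := by
  simp [PiLp.inner_apply, Fin.sum_univ_two]; ring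
lemma rot0 (v : E2) : rot v 0 = -(v 1) := rfl
lemma rot1 (v : E2) : rot v 1 = v 0 := rfl
def rotL : E2 →L[ℝ] E2 := LinearMap.toContinuousLinearMap
  { toFun := rot
    map_add' := by
      intro u v; ext i
      fin_cases i <;> (simp [rot0, rot1, rot]; try ring)
    map_smul' := by
      intro a v; ext i
      fin_cases i <;> simp [rot0, rot1, rot, mul_comm] }
lemma rotL_apply (v : E2) : rotL v = rot v := rfl
lemma rot_smul (a : ℝ) (v : E2) : rot (a • v) = a • rot v := by
  rw [← rotL_apply, ← rotL_apply, _root_.map_smul]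
lemma inner_rot_antisymm (u v : E2) : (inner ℝ u (rot v) : ℝ) = -(inner ℝ v (rot u) : ℝ) := by
  simp [inner_ex, rot0, rot1]; ring

lemma inner_rot_antisymm' (u v : E2) : (inner ℝ (rot u) v : ℝ) = -(inner ℝ u (rot v) : ℝ) := by
  simp only [inner_ex, rot0, rot1]; ring

lemma rot_add (u v : E2) : rot (u + v) = rot u + rot v := by
  rw [← rotL_apply, ← rotL_apply, ← rotL_apply, _root_.map_add]

lemma inner_rot_rot (u v : E2) : (inner ℝ (rot u) (rot v) : ℝ) = inner ℝ u v := by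
  simp [inner_ex, rot0, rot1]; ring
lemma inner_rot_self (u : E2) : (inner ℝ (rot u) u : ℝ) = 0 := by
  simp [inner_ex, rot0, rot1]; ring
lemma inner_self_rot (u : E2) : (inner ℝ u (rot u) : ℝ) = 0 := by
  simp [inner_ex, rot0, rot1]; ring
lemma rot_rot (u : E2) : rot (rot u) = -u := by
  ext i; fin_cases i <;> simp [rot0, rot1, rot]
lemma lagrange (u v : E2) : (inner ℝ u u : ℝ) * (inner ℝ v v : ℝ)
    = (inner ℝ u v : ℝ) ^ 2 + (inner ℝ (rot u) v : ℝ) ^ 2 := by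
  simp only [inner_ex, rot0, rot1]; ring

variable {G : Type*} [NormedAddCommGroup G] [NormedSpace ℝ G]

lemma HasDerivAt.rotc {f : ℝ → E2} {f' : E2} {x : ℝ} (hf : HasDerivAt f f' x) :
    HasDerivAt (fun y => rot (f y)) (rot f') x := by
  exact (rotL.hasFDerivAt.comp_hasDerivAt x hf)

lemma hasDerivAt_norm_comp {f : ℝ → E2} {f' : E2} {x : ℝ}
    (hf : HasDerivAt f f' x) (h0 : f x ≠ 0) :
    HasDerivAt (fun y => ‖f y‖) ((inner ℝ (f x) f' : ℝ) / ‖f x‖) x := by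
  have h1 : (fun y => ‖f y‖) = fun y => Real.sqrt (‖f y‖ ^ 2) := by
    funext y; rw [Real.sqrt_sq (norm_nonneg _)]
  have h2 : HasDerivAt (fun y => ‖f y‖ ^ 2) (2 * (inner ℝ (f x) f' : ℝ)) x := hf.norm_sq
  have h3 : (‖f x‖ ^ 2 : ℝ) ≠ 0 := pow_ne_zero _ (norm_ne_zero_iff.2 h0)
  have h4 := (Real.hasDerivAt_sqrt h3).comp x h2
  rw [h1]
  refine h4.congr_deriv ?_
  rw [Real.sqrt_sq (norm_nonneg _)]
  field_simp

/-- slice in first variable -/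
lemma hasDerivAt_slice1 {f : ℝ × ℝ → G} (hf : Differentiable ℝ f) (x s : ℝ) :
    HasDerivAt (fun y => f (y, s)) (fderiv ℝ f (x, s) (1, 0)) x :=
  (hf (x, s)).hasFDerivAt.comp_hasDerivAt x ((hasDerivAt_id x).prodMk (hasDerivAt_const x s))

lemma hasDerivAt_slice2 {f : ℝ × ℝ → G} (hf : Differentiable ℝ f) (x s : ℝ) :
    HasDerivAt (fun s' => f (x, s')) (fderiv ℝ f (x, s) (0, 1)) s :=
  (hf (x, s)).hasFDerivAt.comp_hasDerivAt s ((hasDerivAt_const s x).prodMk (hasDerivAt_id s))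

/-- Schwarz symmetry, as a `HasDerivAt` statement. -/
lemma schwarz_hasDerivAt {f : ℝ × ℝ → G} (hf : ContDiff ℝ (⊤ : ℕ∞) f) (x t : ℝ) :
    HasDerivAt (fun s => deriv (fun y => f (y, s)) x)
      (deriv (fun y => deriv (fun s' => f (y, s')) t) x) t := by
  have hd : Differentiable ℝ f := hf.differentiable (by simp)
  set F := fderiv ℝ f with hF
  have hFc : ContDiff ℝ (⊤ : ℕ∞) F := hf.fderiv_right (by simp)
  have hFd : Differentiable ℝ F := hFc.differentiable (by simp)
  -- the function s ↦ ∂₁f(x,s) equals s ↦ F (x,s) (1,0)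
  have e1 : (fun s => deriv (fun y => f (y, s)) x) = fun s => F (x, s) (1, 0) := by
    funext s; exact (hasDerivAt_slice1 hd x s).deriv
  have e2 : (fun y => deriv (fun s' => f (y, s')) t) = fun y => F (y, t) (0, 1) := by
    funext y; exact (hasDerivAt_slice2 hd y t).deriv
  rw [e1, e2]
  -- derivative of s ↦ F(x,s)(1,0) at t is (fderiv F (x,t) (0,1)) (1,0)
  have h1 : HasDerivAt (fun s => F (x, s) ((1 : ℝ), (0 : ℝ)))
      (fderiv ℝ F (x, t) (0, 1) ((1 : ℝ), (0 : ℝ))) t := by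
    have := (ContinuousLinearMap.apply ℝ G ((1 : ℝ), (0 : ℝ))).hasFDerivAt.comp_hasDerivAt t
      (hasDerivAt_slice2 hFd x t)
    simpa [Function.comp_def] using this
  have h2 : HasDerivAt (fun y => F (y, t) ((0 : ℝ), (1 : ℝ)))
      (fderiv ℝ F (x, t) (1, 0) ((0 : ℝ), (1 : ℝ))) x := by
    have := (ContinuousLinearMap.apply ℝ G ((0 : ℝ), (1 : ℝ))).hasFDerivAt.comp_hasDerivAt x
      (hasDerivAt_slice1 hFd x t)
    simpa [Function.comp_def] using this
  rw [h2.deriv]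
  have hsymm : fderiv ℝ F (x, t) (0, 1) ((1 : ℝ), (0 : ℝ))
      = fderiv ℝ F (x, t) (1, 0) ((0 : ℝ), (1 : ℝ)) := by
    have := (hf.contDiffAt (x := (x, t))).isSymmSndFDerivAt (n := (⊤ : ℕ∞)) (by simp; exact WithTop.coe_le_coe.mpr (le_top : (2:ℕ∞) ≤ ⊤))
    exact this _ _
  rw [← hsymm]; exact h1

lemma aDn_succ' (c : ℝ → E2) (n : ℕ) (f : ℝ → ℝ) :
    aDn c (n + 1) f = aD c (aDn c n f) := by
  simp [aDn, Function.iterate_succ_apply']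

lemma aDn_one (c : ℝ → E2) (f : ℝ → ℝ) : aDn c 1 f = aD c f := rfl

section curve
variable {c : ℝ → E2}

lemma dsmooth {F : Type*} [NormedAddCommGroup F] [NormedSpace ℝ F] {f : ℝ → F}
    (hf : ContDiff ℝ ∞ f) : ContDiff ℝ ∞ (deriv f) := (contDiff_infty_iff_deriv.mp hf).2

lemma c1_smooth (hc : ContDiff ℝ ∞ c) : ContDiff ℝ ∞ (deriv c) := dsmooth hc

lemma hasDerivAt_c (hc : ContDiff ℝ ∞ c) (y : ℝ) : HasDerivAt c (deriv c y) y :=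
  ((hc.differentiable (by norm_num)) y).hasDerivAt

lemma w_ne (hreg : ∀ y, deriv c y ≠ 0) (y : ℝ) : ‖deriv c y‖ ≠ 0 := norm_ne_zero_iff.2 (hreg y)

lemma w_smooth (hc : ContDiff ℝ ∞ c) (hreg : ∀ y, deriv c y ≠ 0) : ContDiff ℝ ∞ (fun y => ‖deriv c y‖) :=
  (c1_smooth hc).norm ℝ hreg

lemma hasDerivAt_w (hc : ContDiff ℝ ∞ c) (hreg : ∀ y, deriv c y ≠ 0) (y : ℝ) :
    HasDerivAt (fun z => ‖deriv c z‖)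
      ((inner ℝ (deriv c y) (deriv (deriv c) y) : ℝ) / ‖deriv c y‖) y :=
  hasDerivAt_norm_comp (hasDerivAt_c (dsmooth hc) y) (hreg y)

lemma aD_contDiff (hc : ContDiff ℝ ∞ c) (hreg : ∀ y, deriv c y ≠ 0) {f : ℝ → ℝ} (hf : ContDiff ℝ ∞ f) : ContDiff ℝ ∞ (aD c f) := by
  have : aD c f = fun y => (‖deriv c y‖)⁻¹ • deriv f y := rfl
  rw [this]
  exact ((w_smooth hc hreg).inv (w_ne hreg)).smul (dsmooth hf)

lemma aDn_contDiff (hc : ContDiff ℝ ∞ c) (hreg : ∀ y, deriv c y ≠ 0) {f : ℝ → ℝ} (hf : ContDiff ℝ ∞ f) (n : ℕ) :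
    ContDiff ℝ ∞ (aDn c n f) := by
  induction n with
  | zero => exact hf
  | succ n ih => rw [aDn_succ']; exact aD_contDiff hc hreg ih

lemma hasD {F : Type*} [NormedAddCommGroup F] [NormedSpace ℝ F] {f : ℝ → F}
    (hf : ContDiff ℝ ∞ f) (y : ℝ) : HasDerivAt f (deriv f y) y :=
  ((hf.differentiable (by norm_num)) y).hasDerivAt

lemma tau_apply (c : ℝ → E2) (y : ℝ) : tau c y = ‖deriv c y‖⁻¹ • deriv c y := rfl

lemma nu_apply (c : ℝ → E2) (y : ℝ) : nu c y = ‖deriv c y‖⁻¹ • rot (deriv c y) := by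
  rw [nu, tau_apply, rot_smul]

lemma curv_formula (hc : ContDiff ℝ ∞ c) (y : ℝ) :
    curv c y = (inner ℝ (deriv (deriv c) y) (rot (deriv c y)) : ℝ)
      * ((Real.sqrt (inner ℝ (deriv c y) (deriv c y) : ℝ)) ^ 3)⁻¹ := by
  by_cases h0 : deriv c y = 0
  · have : curv c y = 0 := by
      simp [curv, aD, h0]
    rw [this, h0]
    have : rot (0 : E2) = 0 := by rw [← rotL_apply, map_zero]
    simp [this]
  · set A := deriv c y with hA
    set B := deriv (deriv c) y with hB
    set w := ‖deriv c y‖ with hw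
    have hwne : w ≠ 0 := norm_ne_zero_iff.2 h0
    have hW : HasDerivAt (fun z => ‖deriv c z‖) ((inner ℝ A B : ℝ) / w) y :=
      hasDerivAt_norm_comp (hasD (dsmooth hc) y) h0
    have hWinv : HasDerivAt (fun z => (‖deriv c z‖)⁻¹)
        (-((inner ℝ A B : ℝ) / w) / w ^ 2) y := hW.inv hwne
    have htau : HasDerivAt (tau c)
        (w⁻¹ • B + (-((inner ℝ A B : ℝ) / w) / w ^ 2) • A) y := by
      have := hWinv.smul (hasD (dsmooth hc) y)
      exact this
    have hcurv : curv c y = (inner ℝ (w⁻¹ • (w⁻¹ • B + (-((inner ℝ A B : ℝ) / w) / w ^ 2) • A))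
        (w⁻¹ • rot A) : ℝ) := by
      rw [curv]
      rw [show aD c (tau c) y = ‖deriv c y‖⁻¹ • deriv (tau c) y from rfl, htau.deriv,
        nu_apply]
    rw [hcurv]
    have hsq : Real.sqrt (inner ℝ A A : ℝ) = w := by
      rw [real_inner_self_eq_norm_sq, Real.sqrt_sq (norm_nonneg _)]
    rw [hsq]
    rw [real_inner_smul_left, real_inner_smul_right, inner_add_left,
      real_inner_smul_left, real_inner_smul_left, inner_self_rot]
    ring

lemma curv_eq (hc : ContDiff ℝ ∞ c) (hreg : ∀ y, deriv c y ≠ 0) (y : ℝ) :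
    curv c y = (inner ℝ (deriv (deriv c) y) (rot (deriv c y)) : ℝ) * ((‖deriv c y‖ : ℝ) ^ 3)⁻¹ := by
  rw [curv_formula hc y, real_inner_self_eq_norm_sq, Real.sqrt_sq (norm_nonneg _)]

lemma curv_smooth (hc : ContDiff ℝ ∞ c) (hreg : ∀ y, deriv c y ≠ 0) :
    ContDiff ℝ ∞ (curv c) := by
  have : curv c = fun y => (inner ℝ (deriv (deriv c) y) (rot (deriv c y)) : ℝ)
      * ((‖deriv c y‖ : ℝ) ^ 3)⁻¹ := funext (curv_eq hc hreg)
  rw [this]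
  have h1 : ContDiff ℝ ∞ (fun y => rot (deriv c y)) := by
    have : (fun y => rot (deriv c y)) = fun y => rotL (deriv c y) := rfl
    rw [this]
    exact rotL.contDiff.comp (dsmooth hc)
  exact ((dsmooth (dsmooth hc)).inner ℝ h1).mul
    (((w_smooth hc hreg).pow 3).inv fun y => pow_ne_zero _ (w_ne hreg y))
lemma aD_scalar (c : ℝ → E2) (f : ℝ → ℝ) (y : ℝ) :
    aD c f y = (‖deriv c y‖)⁻¹ * deriv f y := rfl

/-- `∂ₛ` of a pointwise combination `-f + a g + b f³`. -/
lemma aD_comb (hc : ContDiff ℝ ∞ c) (hreg : ∀ y, deriv c y ≠ 0)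
    {f g : ℝ → ℝ} (hf : ContDiff ℝ ∞ f) (hg : ContDiff ℝ ∞ g) (a b : ℝ) :
    aD c (fun y => -(f y) + a * g y + b * (f y) ^ 3)
      = fun y => -(aD c f y) + a * aD c g y + 3 * b * (f y) ^ 2 * aD c f y := by
  funext y
  have h1 : HasDerivAt (fun y => -(f y) + a * g y + b * (f y) ^ 3)
      (-(deriv f y) + a * deriv g y + b * (3 * (f y) ^ 2 * deriv f y)) y := by
    have := (((hasD hf y).neg.add ((hasD hg y).const_mul a)).add
      (((hasD hf y).pow 3).const_mul b))
    refine this.congr_deriv ?_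
    push_cast; ring
  simp only [aD_scalar, h1.deriv]
  ring

/-- `∂ₛ` of a pointwise combination `-f + a g + 3 b f² h`. -/
lemma aD_comb2 (hc : ContDiff ℝ ∞ c) (hreg : ∀ y, deriv c y ≠ 0)
    {f g h p : ℝ → ℝ} (hf : ContDiff ℝ ∞ f) (hg : ContDiff ℝ ∞ g) (hh : ContDiff ℝ ∞ h)
    (hp : ContDiff ℝ ∞ p) (a b : ℝ) (x : ℝ) :
    aD c (fun y => -(f y) + a * g y + 3 * b * (p y) ^ 2 * h y) x
      = -(aD c f x) + a * aD c g x
        + 3 * b * (2 * p x * h x * aD c p x + (p x) ^ 2 * aD c h x) := by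
  have h1 : HasDerivAt (fun y => -(f y) + a * g y + 3 * b * (p y) ^ 2 * h y)
      (-(deriv f x) + a * deriv g x
        + 3 * b * (2 * p x * h x * deriv p x + (p x) ^ 2 * deriv h x)) x := by
    have := ((hasD hf x).neg.add ((hasD hg x).const_mul a)).add
      ((((hasD hp x).pow 2).mul (hasD hh x)).const_mul (3 * b))
    convert this using 1
    · exact rfl
    · exact rfl
    · funext z; simp only [Pi.add_apply, Pi.neg_apply, Pi.mul_apply, Pi.pow_apply]; ring
    · simp only [Pi.pow_apply]; push_cast; ring
  simp only [aD_scalar, h1.deriv]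
  ring
end curve

section part2
variable {c : ℝ → E2}

lemma part2 (hc : ContDiff ℝ ∞ c) (hreg : ∀ y, deriv c y ≠ 0) (ε : ℝ) (x : ℝ) :
    -(aDn c 2 (Eeps ε c) x) - (curv c x) ^ 2 * Eeps ε c x
      = aDn c 2 (curv c) x + (curv c x) ^ 3
        - 2 * ε * aDn c 4 (curv c) x
        - 6 * ε * curv c x * (aDn c 1 (curv c) x) ^ 2
        - 5 * ε * (curv c x) ^ 2 * aDn c 2 (curv c) x
        - ε * (curv c x) ^ 5 := by
  set k := curv c with hk
  have hks : ContDiff ℝ ∞ k := curv_smooth hc hreg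
  have hu1 : ContDiff ℝ ∞ (aD c k) := aD_contDiff hc hreg hks
  have hu2 : ContDiff ℝ ∞ (aD c (aD c k)) := aD_contDiff hc hreg hu1
  have hu3 : ContDiff ℝ ∞ (aD c (aD c (aD c k))) := aD_contDiff hc hreg hu2
  have h2 : aDn c 2 k = aD c (aD c k) := by rw [aDn_succ', aDn_one]
  have h4 : aDn c 4 k = aD c (aD c (aD c (aD c k))) := by
    rw [aDn_succ', aDn_succ', aDn_succ', aDn_one]
  have hE : Eeps ε c = fun y => -(k y) + (2 * ε) * aD c (aD c k) y + ε * (k y) ^ 3 := by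
    funext y; rw [Eeps, h2]
  have hDE : aD c (Eeps ε c)
      = fun y => -(aD c k y) + (2 * ε) * aD c (aD c (aD c k)) y
        + 3 * ε * (k y) ^ 2 * aD c k y := by
    rw [hE]
    exact aD_comb hc hreg hks hu2 (2 * ε) ε
  have hDDE : aDn c 2 (Eeps ε c) x
      = -(aD c (aD c k) x) + (2 * ε) * aD c (aD c (aD c (aD c k))) x
        + 3 * ε * (2 * k x * aD c k x * aD c k x + (k x) ^ 2 * aD c (aD c k) x) := by
    rw [aDn_succ', aDn_one, hDE]
    exact aD_comb2 hc hreg hu1 hu3 hu1 hks (2 * ε) ε x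
  rw [hDDE, hE, h2, h4, aDn_one]
  ring
end part2

section part1
variable {c : ℝ → E2}

lemma aD_neg (hc : ContDiff ℝ ∞ c) {f : ℝ → ℝ} (hf : ContDiff ℝ ∞ f) :
    aD c (fun y => -(f y)) = fun y => -(aD c f y) := by
  funext y
  rw [aD_scalar, aD_scalar, show deriv (fun y => -f y) y = -deriv f y from (hasD hf y).neg.deriv]
  ring

lemma aDn2_neg (hc : ContDiff ℝ ∞ c) (hreg : ∀ y, deriv c y ≠ 0) {f : ℝ → ℝ}
    (hf : ContDiff ℝ ∞ f) (x : ℝ) :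
    aDn c 2 (fun y => -(f y)) x = -(aDn c 2 f x) := by
  have h2 : ∀ g : ℝ → ℝ, aDn c 2 g = aD c (aD c g) := by
    intro g; rw [aDn_succ', aDn_one]
  rw [h2, h2, aD_neg hc hf, aD_neg hc (aD_contDiff hc hreg hf)]

/-- `∂ₛ²V` in explicit scalar form. -/
lemma aDn2_scalar (hc : ContDiff ℝ ∞ c) (hreg : ∀ y, deriv c y ≠ 0)
    {V : ℝ → ℝ} (hV : ContDiff ℝ ∞ V) (x : ℝ) :
    aDn c 2 V x = ‖deriv c x‖⁻¹ *
      (-((inner ℝ (deriv c x) (deriv (deriv c) x) : ℝ) / ‖deriv c x‖) / ‖deriv c x‖ ^ 2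
          * deriv V x
        + ‖deriv c x‖⁻¹ * deriv (deriv V) x) := by
  rw [aDn_succ', aDn_one, aD_scalar]
  congr 1
  have hWinv : HasDerivAt (fun z => (‖deriv c z‖)⁻¹)
      (-((inner ℝ (deriv c x) (deriv (deriv c) x) : ℝ) / ‖deriv c x‖) / ‖deriv c x‖ ^ 2) x :=
    (hasDerivAt_w hc hreg x).inv (w_ne hreg x)
  have h1 : HasDerivAt (fun z => (‖deriv c z‖)⁻¹ * deriv V z)
      (-((inner ℝ (deriv c x) (deriv (deriv c) x) : ℝ) / ‖deriv c x‖) / ‖deriv c x‖ ^ 2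
          * deriv V x
        + ‖deriv c x‖⁻¹ * deriv (deriv V) x) x := by
    exact hWinv.mul (hasD (dsmooth hV) x)
  have : aD c V = fun z => (‖deriv c z‖)⁻¹ * deriv V z := rfl
  rw [this, h1.deriv]

/-- Core of Lemma 3.4, part 1: the time derivative of the curvature along a normal
variation with speed `V` equals `∂ₛ²V + κ²V`. -/
lemma part1core (hc : ContDiff ℝ ∞ c) (hreg : ∀ y, deriv c y ≠ 0)
    {V : ℝ → ℝ} (hV : ContDiff ℝ ∞ V) (x t : ℝ) {g1 g2 : ℝ → E2}
    (hg1v : g1 t = deriv c x) (hg2v : g2 t = deriv (deriv c) x)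
    (hg1 : HasDerivAt g1 (deriv (fun y => V y • nu c y) x) t)
    (hg2 : HasDerivAt g2 (deriv (deriv (fun y => V y • nu c y)) x) t) :
    HasDerivAt (fun s => (inner ℝ (g2 s) (rot (g1 s)) : ℝ)
        * ((Real.sqrt (inner ℝ (g1 s) (g1 s) : ℝ)) ^ 3)⁻¹)
      (aDn c 2 V x + (curv c x) ^ 2 * V x) t := by
  -- notation
  set A := deriv c x with hA
  set B := deriv (deriv c) x with hB
  set C := deriv (deriv (deriv c)) x with hC
  have hAne : A ≠ 0 := hreg x
  set w : ℝ → ℝ := fun y => ‖deriv c y‖ with hwdef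
  have hwne : ∀ y, w y ≠ 0 := w_ne hreg
  -- the scalar factor m = V/w and the vector field h = m • rot c'
  set m : ℝ → ℝ := fun y => V y * (w y)⁻¹ with hmdef
  have hmc : ContDiff ℝ ∞ m := hV.mul ((w_smooth hc hreg).inv hwne)
  set h : ℝ → E2 := fun y => V y • nu c y with hhdef
  have hhm : h = fun y => m y • rot (deriv c y) := by
    funext y
    show V y • nu c y = m y • rot (deriv c y)
    rw [nu_apply, hmdef, smul_smul]
  -- derivative of w and w⁻¹
  have hW : ∀ y, HasDerivAt w ((inner ℝ (deriv c y) (deriv (deriv c) y) : ℝ) / w y) y :=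
    fun y => hasDerivAt_w hc hreg y
  have hWinv : ∀ y, HasDerivAt (fun z => (w z)⁻¹)
      (-((inner ℝ (deriv c y) (deriv (deriv c) y) : ℝ) / w y) / (w y) ^ 2) y :=
    fun y => (hW y).inv (hwne y)
  -- first derivative of m, as a function
  have hm1 : ∀ y, HasDerivAt m
      (deriv V y * (w y)⁻¹
        + V y * (-((inner ℝ (deriv c y) (deriv (deriv c) y) : ℝ) / w y) / (w y) ^ 2)) y :=
    fun y => (hasD hV y).mul (hWinv y)
  have hm1' : deriv m = fun y => deriv V y * (w y)⁻¹
      + V y * (-((inner ℝ (deriv c y) (deriv (deriv c) y) : ℝ) / w y) / (w y) ^ 2) :=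
    funext fun y => (hm1 y).deriv
  -- second derivative of m at x
  have hq : HasDerivAt (fun y => (inner ℝ (deriv c y) (deriv (deriv c) y) : ℝ))
      ((inner ℝ A C : ℝ) + (inner ℝ B B : ℝ)) x := by
    have := HasDerivAt.inner ℝ (hasD (dsmooth hc) x) (hasD (dsmooth (dsmooth hc)) x)
    exact this
  -- rewrite deriv m in a form convenient for differentiating again
  have hm1'' : deriv m = fun y => deriv V y * (w y)⁻¹
      - V y * (inner ℝ (deriv c y) (deriv (deriv c) y) : ℝ) * ((w y)⁻¹) ^ 3 := by
    rw [hm1']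
    funext y
    have : w y ≠ 0 := hwne y
    field_simp
    ring
  have hm2 := ((hasD (dsmooth hV) x).mul (hWinv x)).sub
      (((hasD hV x).mul hq).mul ((hWinv x).pow 3))
  replace hm2 := hm2.congr_of_eventuallyEq (f₁ := deriv m)
    (Filter.Eventually.of_forall fun y => by rw [hm1'']; rfl)
  -- derivative of h
  have hh1 : ∀ y, HasDerivAt h
      (m y • rot (deriv (deriv c) y) + deriv m y • rot (deriv c y)) y := by
    intro y
    rw [hhm]
    exact (hasD hmc y).smul ((hasD (dsmooth hc) y).rotc)
  have hderivh : deriv h = fun y => m y • rot (deriv (deriv c) y)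
      + deriv m y • rot (deriv c y) := funext fun y => (hh1 y).deriv
  have hD1 : deriv h x = m x • rot B + deriv m x • rot A := (hh1 x).deriv
  -- second derivative of h at x
  have hh2 : HasDerivAt (deriv h)
      ((m x • rot C + deriv m x • rot B)
        + (deriv m x • rot B
          + (deriv (deriv V) x * (w x)⁻¹
              + deriv V x * (-((inner ℝ A B : ℝ) / w x) / w x ^ 2)
            - ((deriv V x * (inner ℝ A B : ℝ)
                  + V x * ((inner ℝ A C : ℝ) + (inner ℝ B B : ℝ))) * ((w x)⁻¹) ^ 3
              + V x * (inner ℝ A B : ℝ)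
                * ((3 : ℕ) * ((w x)⁻¹) ^ (3 - 1)
                    * (-((inner ℝ A B : ℝ) / w x) / w x ^ 2)))) • rot A)) x := by
    rw [hderivh]
    exact ((hasD hmc x).smul ((hasD (dsmooth (dsmooth hc)) x).rotc)).add
      (hm2.smul ((hasD (dsmooth hc) x).rotc))
  -- time direction
  have hg1rot : HasDerivAt (fun s => rot (g1 s)) (rot (deriv h x)) t := hg1.rotc
  have hinner : HasDerivAt (fun s => (inner ℝ (g2 s) (rot (g1 s)) : ℝ))
      ((inner ℝ (g2 t) (rot (deriv h x)) : ℝ) + (inner ℝ (deriv (deriv h) x) (rot (g1 t)) : ℝ)) t :=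
    HasDerivAt.inner ℝ hg2 hg1rot
  have hS : HasDerivAt (fun s => (inner ℝ (g1 s) (g1 s) : ℝ))
      ((inner ℝ (g1 t) (deriv h x) : ℝ) + (inner ℝ (deriv h x) (g1 t) : ℝ)) t :=
    HasDerivAt.inner ℝ hg1 hg1
  have hS0 : (inner ℝ (g1 t) (g1 t) : ℝ) ≠ 0 := by
    rw [hg1v, real_inner_self_eq_norm_sq]
    exact pow_ne_zero _ (hwne x)
  have hsqrt := (Real.hasDerivAt_sqrt hS0).comp t hS
  have hsqrt0 : Real.sqrt (inner ℝ (g1 t) (g1 t) : ℝ) ≠ 0 := by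
    rw [hg1v, real_inner_self_eq_norm_sq, Real.sqrt_sq (norm_nonneg _)]
    exact hwne x
  have hfn := hinner.mul ((hsqrt.pow 3).inv (pow_ne_zero 3 hsqrt0))
  refine hfn.congr_deriv ?_
  symm
  -- now the scalar computation
  simp only [Function.comp_apply, Pi.pow_apply, Pi.inv_apply, Pi.mul_apply]
  rw [hg1v, hg2v, hD1, hh2.deriv]
  rw [aDn2_scalar hc hreg hV x, curv_eq hc hreg x]
  have hsq : Real.sqrt (inner ℝ A A : ℝ) = w x := by
    rw [real_inner_self_eq_norm_sq, Real.sqrt_sq (norm_nonneg _)]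
  rw [hsq]
  rw [show ‖deriv c x‖ = w x from rfl]
  rw [show (inner ℝ (deriv c x) (deriv (deriv c) x) : ℝ) = inner ℝ A B from rfl]
  rw [show (inner ℝ (deriv (deriv c) x) (rot (deriv c x)) : ℝ) = inner ℝ B (rot A) from rfl]
  rw [hm1'']; simp only [hmdef]
  simp only [rot_add, rot_smul, rot_rot, inner_add_left, inner_add_right,
    real_inner_smul_left, real_inner_smul_right, inner_rot_rot, inner_self_rot,
    inner_rot_self, inner_neg_left, inner_neg_right, smul_neg, mul_neg, mul_zero,
    zero_mul, add_zero, zero_add, neg_neg, neg_zero]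
  rw [show (inner ℝ (deriv c x) (deriv (deriv c) x) : ℝ) = inner ℝ A B from rfl]
  rw [show (inner ℝ A A : ℝ) = w x ^ 2 from real_inner_self_eq_norm_sq A]
  simp only [real_inner_comm B A, real_inner_comm C A]
  rw [show (inner ℝ (rot B) A : ℝ) = -(inner ℝ B (rot A)) from inner_rot_antisymm' B A]
  rw [show (inner ℝ A (rot B) : ℝ) = -(inner ℝ B (rot A)) from inner_rot_antisymm A B]
  have hBB : (inner ℝ B B : ℝ) = (((inner ℝ B A : ℝ)) ^ 2 + ((inner ℝ B (rot A) : ℝ)) ^ 2) / (w x) ^ 2 := by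
    have hl := lagrange A B
    rw [real_inner_comm B A, real_inner_comm B (rot A)] at hl
    rw [show (inner ℝ A A : ℝ) = w x ^ 2 from real_inner_self_eq_norm_sq A] at hl
    have hwx2 : w x ≠ 0 := hwne x
    rw [eq_div_iff (pow_ne_zero 2 hwx2)]
    linear_combination hl
  rw [hBB]
  have hwx : w x ≠ 0 := hwne x
  set P1 := (inner ℝ B A : ℝ) with hP1
  set Q1 := (inner ℝ B (rot A) : ℝ) with hQ1
  set C1 := (inner ℝ C A : ℝ) with hC1
  push_cast
  field_simp
  ring

end part1


end helpers

/-- `γ` is a smooth family of regular closed plane curves on `ℝ × [0,T)`,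
2π-periodic in the first variable, solving the evolution `∂ₜγ = -E_ε ν`. -/
structure IsFlow (ε : ℝ) (T : EReal) (γ : ℝ → ℝ → E2) : Prop where
  smooth : ContDiff ℝ (⊤ : ℕ∞) (Function.uncurry γ)
  periodic : ∀ t, Function.Periodic (fun x => γ x t) (2 * π)
  regular : ∀ (x t : ℝ), 0 ≤ t → (t : EReal) < T → deriv (curveAt γ t) x ≠ 0
  evol : ∀ (x t : ℝ), 0 ≤ t → (t : EReal) < T →
    deriv (fun s => γ x s) t = (-(Eeps ε (curveAt γ t) x)) • nu (curveAt γ t) x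

/-- Lemma 3.4 (evolution of the curvature):
`∂ₜκ = -∂ₛ²E_ε - κ² E_ε = ∂ₛ²κ + κ³ - 2ε ∂ₛ⁴κ - 6ε κ (∂ₛκ)² - 5ε κ² ∂ₛ²κ - ε κ⁵`. -/
theorem lemma_3_4 (ε : ℝ) (hε : 0 < ε) (T : EReal) (hT : 0 < T)
    (γ : ℝ → ℝ → E2) (hγ : IsFlow ε T γ)
    (x t : ℝ) (ht0 : 0 ≤ t) (htT : (t : EReal) < T) :
    deriv (fun s => curv (curveAt γ s) x) t
      = -(aDn (curveAt γ t) 2 (Eeps ε (curveAt γ t)) x)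
        - (curv (curveAt γ t) x) ^ 2 * Eeps ε (curveAt γ t) x
    ∧ deriv (fun s => curv (curveAt γ s) x) t
      = aDn (curveAt γ t) 2 (curv (curveAt γ t)) x + (curv (curveAt γ t) x) ^ 3
        - 2 * ε * aDn (curveAt γ t) 4 (curv (curveAt γ t)) x
        - 6 * ε * curv (curveAt γ t) x * (aDn (curveAt γ t) 1 (curv (curveAt γ t)) x) ^ 2
        - 5 * ε * (curv (curveAt γ t) x) ^ 2 * aDn (curveAt γ t) 2 (curv (curveAt γ t)) x
        - ε * (curv (curveAt γ t) x) ^ 5 := by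
  have hG : ContDiff ℝ (⊤ : ℕ∞) (Function.uncurry γ) := hγ.smooth
  -- smoothness of each time slice
  have hcs : ∀ s, ContDiff ℝ ∞ (curveAt γ s) := by
    intro s
    have : ContDiff ℝ (⊤ : ℕ∞) (fun y : ℝ => Function.uncurry γ (y, s)) :=
      hG.comp (contDiff_id.prodMk contDiff_const)
    exact this.of_le (by simp)
  have hc : ContDiff ℝ ∞ (curveAt γ t) := hcs t
  have hreg : ∀ y, deriv (curveAt γ t) y ≠ 0 := fun y => hγ.regular y t ht0 htT
  -- smoothness of E
  have hk : ContDiff ℝ ∞ (curv (curveAt γ t)) := curv_smooth hc hreg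
  have hE : ContDiff ℝ ∞ (Eeps ε (curveAt γ t)) := by
    have h2 := aDn_contDiff hc hreg hk 2
    exact (hk.neg.add (contDiff_const.mul h2)).add (contDiff_const.mul (hk.pow 3))
  set V : ℝ → ℝ := fun y => -(Eeps ε (curveAt γ t) y) with hVdef
  have hV : ContDiff ℝ ∞ V := hE.neg
  set h : ℝ → E2 := fun y => V y • nu (curveAt γ t) y with hhdef
  -- the evolution equation, as an equality of functions
  have hfun : (fun y => deriv (fun s' => Function.uncurry γ (y, s')) t) = h :=
    funext fun y => hγ.evol y t ht0 htT
  -- g1 and g2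
  set g1 : ℝ → E2 := fun s => deriv (curveAt γ s) x with hg1def
  set g2 : ℝ → E2 := fun s => deriv (deriv (curveAt γ s)) x with hg2def
  have hg1 : HasDerivAt g1 (deriv h x) t := by
    have H := schwarz_hasDerivAt hG x t
    rw [hfun] at H
    exact H
  -- the map ∂ₓγ, jointly smooth
  set f₂ : ℝ × ℝ → E2 := fun p => deriv (fun y => Function.uncurry γ (y, p.2)) p.1 with hf2def
  have hf₂ : ContDiff ℝ (⊤ : ℕ∞) f₂ := by
    have e : f₂ = fun p => fderiv ℝ (Function.uncurry γ) p (1, 0) := by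
      funext p
      have := (hasDerivAt_slice1 (hG.differentiable (by simp)) p.1 p.2).deriv
      exact this
    rw [e]
    exact (hG.fderiv_right (by simp)).clm_apply contDiff_const
  have inner_eq : (fun y => deriv (fun s' => f₂ (y, s')) t) = deriv h := by
    funext y
    have H := (schwarz_hasDerivAt hG y t).deriv
    rw [hfun] at H
    exact H
  have hg2 : HasDerivAt g2 (deriv (deriv h) x) t := by
    have H := schwarz_hasDerivAt hf₂ x t
    rw [inner_eq] at H
    exact H
  -- curvature along the flow in explicit form
  have fcurv : (fun s => curv (curveAt γ s) x)
      = fun s => (inner ℝ (g2 s) (rot (g1 s)) : ℝ)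
        * ((Real.sqrt (inner ℝ (g1 s) (g1 s) : ℝ)) ^ 3)⁻¹ :=
    funext fun s => curv_formula (hcs s) x
  -- the core computation
  have hcore := part1core hc hreg hV x t (rfl) (rfl) hg1 hg2
  have hderiv : deriv (fun s => curv (curveAt γ s) x) t
      = aDn (curveAt γ t) 2 V x + (curv (curveAt γ t) x) ^ 2 * V x := by
    rw [fcurv]
    exact hcore.deriv
  have hpart1 : deriv (fun s => curv (curveAt γ s) x) t
      = -(aDn (curveAt γ t) 2 (Eeps ε (curveAt γ t)) x)
        - (curv (curveAt γ t) x) ^ 2 * Eeps ε (curveAt γ t) x := by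
    rw [hderiv, hVdef, aDn2_neg hc hreg hE x]
    ring
  refine ⟨hpart1, ?_⟩
  rw [hpart1]
  exact part2 hc hreg ε x
end
end

section
/- (Inequality (3.7) of Remark 3.6.) There exists a universal constant C > 0 such that for every smooth regular closed plane curve γ and every smooth 2π-periodic function u : ℝ → ℝ, ∫_γ u⁶ ds ≤ ∫_γ (∂ₛ² u)² ds + C (∫_γ u² ds)⁵ + (C/L²) (∫_γ u² ds)³. -/
open Real MeasureTheory

noncomputable section

private lemma intInt {h : ℝ → ℝ} (hh : Continuous h) :
    IntervalIntegrable h volume 0 (2*π) := hh.intervalIntegrable _ _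

private lemma periodic_deriv' {F : Type*} [NormedAddCommGroup F] [NormedSpace ℝ F]
    {f : ℝ → F} {c : ℝ} (hf : Function.Periodic f c) : Function.Periodic (deriv f) c := by
  intro x
  have h : (fun y => f (y + c)) = f := funext fun y => hf y
  calc deriv f (x + c) = deriv (fun y => f (y + c)) x := (deriv_comp_add_const f c x).symm
    _ = deriv f x := by rw [h]

private lemma cs_integral {f g : ℝ → ℝ} (hf : Continuous f) (hg : Continuous g) :
    (∫ x in (0:ℝ)..(2*π), f x * g x)^2 ≤
      (∫ x in (0:ℝ)..(2*π), (f x)^2) * (∫ x in (0:ℝ)..(2*π), (g x)^2) := by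
  set F := ∫ x in (0:ℝ)..(2*π), (f x)^2 with hF
  set G := ∫ x in (0:ℝ)..(2*π), (g x)^2 with hG
  set I := ∫ x in (0:ℝ)..(2*π), f x * g x with hI
  have key : ∀ t : ℝ, 0 ≤ F * (t*t) + (2*I) * t + G := by
    intro t
    have h1 : (∫ x in (0:ℝ)..(2*π), (t * f x + g x)^2)
        = F * (t*t) + (2*I)*t + G := by
      have e : ∀ x, (t * f x + g x)^2
          = (t*t) * (f x)^2 + (2*t) * (f x * g x) + (g x)^2 := fun x => by ring
      rw [intervalIntegral.integral_congr (g := fun x =>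
        (t*t) * (f x)^2 + (2*t) * (f x * g x) + (g x)^2) (fun x _ => e x),
        intervalIntegral.integral_add (((intInt (h := fun x => (f x)^2) (hf.pow 2)).const_mul _).add
          ((intInt (h := fun x => f x * g x) (hf.mul hg)).const_mul _)) (intInt (h := fun x => (g x)^2) (hg.pow 2)),
        intervalIntegral.integral_add ((intInt (h := fun x => (f x)^2) (hf.pow 2)).const_mul _)
          ((intInt (h := fun x => f x * g x) (hf.mul hg)).const_mul _),
        intervalIntegral.integral_const_mul, intervalIntegral.integral_const_mul]
      rw [hF, hG, hI]; ring
    rw [← h1]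
    apply intervalIntegral.integral_nonneg (by positivity)
    intro x _; positivity
  have hd := discrim_le_zero key
  rw [discrim] at hd
  nlinarith

private lemma cs_weighted {f g w : ℝ → ℝ} (hf : Continuous f) (hg : Continuous g)
    (hw : Continuous w) (hw0 : ∀ x, 0 ≤ w x) :
    (∫ x in (0:ℝ)..(2*π), f x * g x * w x)^2 ≤
      (∫ x in (0:ℝ)..(2*π), (f x)^2 * w x) * (∫ x in (0:ℝ)..(2*π), (g x)^2 * w x) := by
  have hsq : Continuous fun x => Real.sqrt (w x) := Real.continuous_sqrt.comp hw
  have h := cs_integral (f := fun x => f x * Real.sqrt (w x))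
    (g := fun x => g x * Real.sqrt (w x)) (hf.mul hsq) (hg.mul hsq)
  have e1 : ∀ x, (f x * Real.sqrt (w x)) * (g x * Real.sqrt (w x)) = f x * g x * w x := by
    intro x
    calc (f x * Real.sqrt (w x)) * (g x * Real.sqrt (w x))
        = f x * g x * (Real.sqrt (w x) * Real.sqrt (w x)) := by ring
      _ = f x * g x * w x := by rw [Real.mul_self_sqrt (hw0 x)]
  have e2 : ∀ (h : ℝ → ℝ) x, (h x * Real.sqrt (w x))^2 = (h x)^2 * w x := by
    intro h x
    calc (h x * Real.sqrt (w x))^2 = (h x)^2 * (Real.sqrt (w x) * Real.sqrt (w x)) := by ring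
      _ = (h x)^2 * w x := by rw [Real.mul_self_sqrt (hw0 x)]
  rwa [intervalIntegral.integral_congr (fun x _ => e1 x),
    intervalIntegral.integral_congr (fun x _ => e2 f x),
    intervalIntegral.integral_congr (fun x _ => e2 g x)] at h

private lemma aux_sq_sum (p s : ℝ) :
    p^2 + 4 * p * s + 4 * s^2 ≤ 2 * p^2 + 8 * s^2 := by
  nlinarith [sq_nonneg (p - 2*s)]

private lemma aux_young (a d : ℝ) :
    8 * (a^2)^2 * (a * d) ≤ d^2 + 16 * (a^2)^5 := by
  nlinarith [sq_nonneg (d - 4*a^5)]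

set_option maxHeartbeats 2000000 in
/-- Inequality (3.7) of Remark 3.6:
`∫_γ u⁶ ds ≤ ∫_γ (∂ₛ²u)² ds + C (∫_γ u² ds)⁵ + (C/L²) (∫_γ u² ds)³`. -/
theorem rem_3_6_sixth :
    ∃ C : ℝ, 0 < C ∧
      ∀ (γ : ℝ → E2), IsClosedCurve γ →
      ∀ (u : ℝ → ℝ), ContDiff ℝ (⊤ : ℕ∞) u → Function.Periodic u (2 * π) →
        Ig γ (fun x => (u x) ^ 6)
          ≤ Ig γ (fun x => (aDn γ 2 u x) ^ 2)
            + C * (Ig γ (fun x => (u x) ^ 2)) ^ 5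
            + C / (len γ) ^ 2 * (Ig γ (fun x => (u x) ^ 2)) ^ 3 := by
  refine ⟨16, by norm_num, ?_⟩
  intro γ hγ u hu hup
  have hπ : (0:ℝ) < 2*π := by positivity
  set w : ℝ → ℝ := fun x => ‖deriv γ x‖ with hw_def
  -- smoothness basics
  have hγ2 : ContDiff ℝ 2 γ := hγ.smooth.of_le (WithTop.coe_le_coe.mpr le_top)
  have hu2 : ContDiff ℝ 2 u := hu.of_le (WithTop.coe_le_coe.mpr le_top)
  have h21 : (2 : WithTop ℕ∞) = 1 + 1 := by norm_num
  have hγ' : ContDiff ℝ 1 (deriv γ) := by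
    have := (contDiff_succ_iff_deriv (n := 1)).mp (h21 ▸ hγ2)
    exact this.2.2
  have hu' : ContDiff ℝ 1 (deriv u) := by
    have := (contDiff_succ_iff_deriv (n := 1)).mp (h21 ▸ hu2)
    exact this.2.2
  have hudiff : Differentiable ℝ u := hu2.differentiable (by norm_num)
  have hw1 : ContDiff ℝ 1 w := hγ'.norm ℝ hγ.regular
  have hwc : Continuous w := hw1.continuous
  have hwpos : ∀ x, 0 < w x := fun x => norm_pos_iff.mpr (hγ.regular x)
  have hwne : ∀ x, w x ≠ 0 := fun x => (hwpos x).ne'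
  -- periodicity
  have hwper : Function.Periodic w (2*π) :=
    fun x => congrArg norm (periodic_deriv' hγ.periodic x)
  have huper' : Function.Periodic (deriv u) (2*π) := periodic_deriv' hup
  -- v1 = aD γ u
  set v1 : ℝ → ℝ := aD γ u with hv1_def
  have hv1x : ∀ x, v1 x = (w x)⁻¹ * deriv u x := fun x => rfl
  have hv1cd : ContDiff ℝ 1 v1 := by
    have : v1 = fun x => (w x)⁻¹ * deriv u x := funext hv1x
    rw [this]
    exact (hw1.inv hwne).mul hu'
  have hv1diff : Differentiable ℝ v1 := hv1cd.differentiable one_ne_zero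
  have hv1c : Continuous v1 := hv1cd.continuous
  have hv1'c : Continuous (deriv v1) := (contDiff_one_iff_deriv.mp hv1cd).2
  have hv1per : Function.Periodic v1 (2*π) := by
    intro x
    rw [hv1x, hv1x, hwper x, huper' x]
  -- v2 = aDn γ 2 u
  set v2 : ℝ → ℝ := aDn γ 2 u with hv2_def
  have hv2x : ∀ x, v2 x = (w x)⁻¹ * deriv v1 x := fun x => rfl
  have hv2c : Continuous v2 := by
    have : v2 = fun x => (w x)⁻¹ * deriv v1 x := funext hv2x
    rw [this]
    exact (hwc.inv₀ hwne).mul hv1'c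
  have hderiv_u : ∀ x, deriv u x = v1 x * w x := by
    intro x; rw [hv1x]; field_simp
    rw [mul_div_cancel_right₀ _ (hwne x)]
  have hderiv_v1 : ∀ x, deriv v1 x = v2 x * w x := by
    intro x; rw [hv2x]; field_simp
    rw [mul_div_cancel_right₀ _ (hwne x)]
  have huc : Continuous u := hu2.continuous
  have hu'c : Continuous (deriv u) := hu'.continuous
  -- the three integrals
  set A := ∫ x in (0:ℝ)..(2*π), (u x)^2 * w x with hA_def
  set B := ∫ x in (0:ℝ)..(2*π), (v1 x)^2 * w x with hB_def
  set D := ∫ x in (0:ℝ)..(2*π), (v2 x)^2 * w x with hD_def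
  have hIgA : Ig γ (fun x => (u x)^2) = A := rfl
  have hIgD : Ig γ (fun x => (aDn γ 2 u x)^2) = D := rfl
  have hA0 : 0 ≤ A := intervalIntegral.integral_nonneg hπ.le
    (fun x _ => by have := (hwpos x).le; positivity)
  have hB0 : 0 ≤ B := intervalIntegral.integral_nonneg hπ.le
    (fun x _ => by have := (hwpos x).le; positivity)
  have hD0 : 0 ≤ D := intervalIntegral.integral_nonneg hπ.le
    (fun x _ => by have := (hwpos x).le; positivity)
  -- length
  set L := len γ with hL_def
  have hLw : L = ∫ x in (0:ℝ)..(2*π), w x := by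
    rw [hL_def, len, Ig]; simp; rfl
  have hLpos : 0 < L := by
    rw [hLw]
    exact intervalIntegral.intervalIntegral_pos_of_pos_on (intInt hwc)
      (fun x _ => hwpos x) hπ
  -- Step 1: integration by parts: B = - ∫ u v2 w
  set I2 := ∫ x in (0:ℝ)..(2*π), u x * v2 x * w x with hI2_def
  have hdm : ∀ x, deriv (fun y => u y * v1 y) x
      = deriv u x * v1 x + u x * deriv v1 x := by
    intro x
    exact deriv_mul (hudiff x) (hv1diff x)
  have hdmc : Continuous (deriv fun y => u y * v1 y) := by
    have : (deriv fun y => u y * v1 y)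
        = fun x => deriv u x * v1 x + u x * deriv v1 x := funext hdm
    rw [this]; exact (hu'c.mul hv1c).add (huc.mul hv1'c)
  have hIBP : B = - I2 := by
    have h0 : ∫ x in (0:ℝ)..(2*π), deriv (fun y => u y * v1 y) x = 0 := by
      rw [intervalIntegral.integral_deriv_eq_sub (f := fun y => u y * v1 y)
        (fun x _ => (hudiff x).mul (hv1diff x)) (intInt hdmc)]
      have h1 := hup 0
      have h2 := hv1per 0
      rw [zero_add] at h1 h2
      rw [h1, h2]; ring
    have hsplit : ∫ x in (0:ℝ)..(2*π), deriv (fun y => u y * v1 y) x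
        = B + I2 := by
      have e : ∀ x, deriv (fun y => u y * v1 y) x
          = (v1 x)^2 * w x + u x * v2 x * w x := by
        intro x
        rw [hdm x, hderiv_u x, hderiv_v1 x]; ring
      rw [intervalIntegral.integral_congr (g := fun x =>
          (v1 x)^2 * w x + u x * v2 x * w x) (fun x _ => e x),
        intervalIntegral.integral_add (intInt (h := fun x => (v1 x)^2 * w x) ((hv1c.pow 2).mul hwc))
          (intInt (h := fun x => u x * v2 x * w x) ((huc.mul hv2c).mul hwc))]
    rw [hsplit] at h0
    linarith
  -- Cauchy-Schwarz: I2² ≤ A * D, hence B ≤ √(A*D)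
  have hCS1 : I2^2 ≤ A * D :=
    cs_weighted huc hv2c hwc (fun x => (hwpos x).le)
  have hBsq : B^2 ≤ A * D := by rw [hIBP]; rw [neg_pow]; simpa using hCS1
  have hBle : B ≤ Real.sqrt (A * D) := by
    calc B = Real.sqrt (B^2) := by rw [Real.sqrt_sq hB0]
      _ ≤ Real.sqrt (A * D) := Real.sqrt_le_sqrt hBsq
  -- J := ∫ |u| |v1| w ≤ √(A*B)
  set J := ∫ x in (0:ℝ)..(2*π), |u x| * |v1 x| * w x with hJ_def
  have hJ0 : 0 ≤ J := intervalIntegral.integral_nonneg hπ.le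
    (fun x _ => by have := (hwpos x).le; positivity)
  have hCS2 : J^2 ≤ A * B := by
    have h := cs_weighted huc.abs hv1c.abs hwc (fun x => (hwpos x).le)
    have e1 : ∀ x:ℝ, |u x|^2 * w x = (u x)^2 * w x := fun x => by rw [sq_abs]
    have e2 : ∀ x:ℝ, |v1 x|^2 * w x = (v1 x)^2 * w x := fun x => by rw [sq_abs]
    rwa [intervalIntegral.integral_congr (fun x _ => e1 x),
      intervalIntegral.integral_congr (fun x _ => e2 x)] at h
  have hJle : J ≤ Real.sqrt (A * B) := by
    calc J = Real.sqrt (J^2) := by rw [Real.sqrt_sq hJ0]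
      _ ≤ Real.sqrt (A * B) := Real.sqrt_le_sqrt hCS2
  -- min and max of u² on [0, 2π]
  have hicc : (Set.Icc (0:ℝ) (2*π)).Nonempty := Set.nonempty_Icc.mpr hπ.le
  obtain ⟨y, hy, hymin⟩ := isCompact_Icc.exists_isMinOn hicc
    ((huc.pow 2).continuousOn : ContinuousOn (fun x => (u x)^2) _)
  obtain ⟨z, hz, hzmax⟩ := isCompact_Icc.exists_isMaxOn hicc
    ((huc.pow 2).continuousOn : ContinuousOn (fun x => (u x)^2) _)
  -- u(y)² ≤ A / L
  have hymin' : ∀ x ∈ Set.Icc (0:ℝ) (2*π), (u y)^2 ≤ (u x)^2 := fun x hx => hymin hx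
  have hzmax' : ∀ x ∈ Set.Icc (0:ℝ) (2*π), (u x)^2 ≤ (u z)^2 := fun x hx => hzmax hx
  have hyA : (u y)^2 * L ≤ A := by
    have : (u y)^2 * L = ∫ x in (0:ℝ)..(2*π), (u y)^2 * w x := by
      rw [intervalIntegral.integral_const_mul, hLw]
    rw [this]
    apply intervalIntegral.integral_mono_on hπ.le
      ((intInt hwc).const_mul _) (intInt ((huc.pow 2).mul hwc))
    intro x hx
    exact mul_le_mul_of_nonneg_right (hymin' x hx) (hwpos x).le
  have hyA' : (u y)^2 ≤ A / L := (le_div_iff₀ hLpos).mpr hyA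
  -- FTC: u(z)² ≤ u(y)² + 2J
  have hd2 : ∀ x, deriv (fun t => u t * u t) x = 2 * (u x * deriv u x) := by
    intro x; rw [show (fun t => u t * u t) = u * u from rfl, deriv_mul (hudiff x) (hudiff x)]; ring
  have hd2c : Continuous (deriv fun t => u t * u t) := by
    have : (deriv fun t => u t * u t) = fun x => 2 * (u x * deriv u x) :=
      funext hd2
    rw [this]; exact (continuous_const.mul (huc.mul hu'c))
  have hFTC : u z * u z - u y * u y
      = ∫ x in y..z, deriv (fun t => u t * u t) x := by
    rw [intervalIntegral.integral_deriv_eq_sub (f := fun t => u t * u t)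
      (fun x _ => (hudiff x).mul (hudiff x))
      ((hd2c.intervalIntegrable _ _))]
  have habs2 : ∀ x:ℝ, |deriv (fun t => u t * u t) x| = 2 * (|u x| * |v1 x| * w x) := by
    intro x
    rw [hd2 x, hderiv_u x, abs_mul, abs_mul, abs_mul]
    rw [abs_of_nonneg (hwpos x).le]
    norm_num
    ring
  have hsub : |∫ x in y..z, deriv (fun t => u t * u t) x| ≤ 2 * J := by
    have hmono : ∀ a b : ℝ, a ∈ Set.Icc (0:ℝ) (2*π) → b ∈ Set.Icc (0:ℝ) (2*π) → a ≤ b →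
        |∫ x in a..b, deriv (fun t => u t * u t) x| ≤ 2 * J := by
      intro a b ha hb hab
      calc |∫ x in a..b, deriv (fun t => u t * u t) x|
          ≤ ∫ x in a..b, |deriv (fun t => u t * u t) x| :=
            intervalIntegral.abs_integral_le_integral_abs hab
        _ ≤ ∫ x in (0:ℝ)..(2*π), |deriv (fun t => u t * u t) x| := by
            apply intervalIntegral.integral_mono_interval ha.1 hab hb.2
            · exact Filter.Eventually.of_forall fun x => abs_nonneg _
            · exact intInt hd2c.abs
        _ = 2 * J := by
            rw [intervalIntegral.integral_congr (g := fun x =>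
              2 * (|u x| * |v1 x| * w x)) (fun x _ => habs2 x),
              intervalIntegral.integral_const_mul]
    rcases le_total y z with hyz | hzy
    · exact hmono y z hy hz hyz
    · rw [intervalIntegral.integral_symm, abs_neg]
      exact hmono z y hz hy hzy
  have hMbound : (u z)^2 ≤ A / L + 2 * Real.sqrt (A * B) := by
    have h1 : u z * u z - u y * u y ≤ 2 * J := by
      calc u z * u z - u y * u y
          = ∫ x in y..z, deriv (fun t => u t * u t) x := hFTC
        _ ≤ |∫ x in y..z, deriv (fun t => u t * u t) x| := le_abs_self _
        _ ≤ 2 * J := hsub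
    have h2 : (u z)^2 ≤ (u y)^2 + 2*J := by rw [pow_two, pow_two]; linarith
    calc (u z)^2 ≤ (u y)^2 + 2*J := h2
      _ ≤ A / L + 2 * Real.sqrt (A * B) := by
          have := hJle
          linarith [hyA']
  -- the pointwise sixth-power bound
  set K := A / L + 2 * Real.sqrt (A * B) with hK_def
  have hK0 : 0 ≤ K := by
    have h1 := Real.sqrt_nonneg (A*B)
    have h2 : 0 ≤ A / L := div_nonneg hA0 hLpos.le
    rw [hK_def]; linarith
  have h6 : Ig γ (fun x => (u x)^6) ≤ K^2 * A := by
    have hpt : ∀ x ∈ Set.Icc (0:ℝ) (2*π),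
        (u x)^6 * w x ≤ K^2 * ((u x)^2 * w x) := by
      intro x hx
      have h1 : (u x)^2 ≤ K := le_trans (hzmax' x hx) hMbound
      have h2 : (0:ℝ) ≤ (u x)^2 := sq_nonneg _
      have hw0 := (hwpos x).le
      have h3 : ((u x)^2)^2 ≤ K^2 := pow_le_pow_left₀ h2 h1 2
      have h4 : (u x)^6 = ((u x)^2)^2 * (u x)^2 := by ring
      rw [h4]
      calc ((u x)^2)^2 * (u x)^2 * w x
          ≤ K^2 * (u x)^2 * w x :=
            mul_le_mul_of_nonneg_right (mul_le_mul_of_nonneg_right h3 h2) hw0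
        _ = K^2 * ((u x)^2 * w x) := by ring
    have : Ig γ (fun x => (u x)^6) = ∫ x in (0:ℝ)..(2*π), (u x)^6 * w x := rfl
    rw [this]
    calc (∫ x in (0:ℝ)..(2*π), (u x)^6 * w x)
        ≤ ∫ x in (0:ℝ)..(2*π), K^2 * ((u x)^2 * w x) := by
          apply intervalIntegral.integral_mono_on hπ.le
            (intInt ((huc.pow 6).mul hwc))
            ((intInt ((huc.pow 2).mul hwc)).const_mul _) hpt
      _ = K^2 * A := by rw [intervalIntegral.integral_const_mul]
  -- K² A ≤ 2A³/L² + 8A²B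
  have hsqAB : Real.sqrt (A*B) ^ 2 = A * B := Real.sq_sqrt (mul_nonneg hA0 hB0)
  have hKsq : K^2 * A ≤ 2 * A^3 / L^2 + 8 * A^2 * B := by
    have hs0 := Real.sqrt_nonneg (A*B)
    have expand : K^2 = (A/L)^2 + 4 * (A/L) * Real.sqrt (A*B)
        + 4 * (Real.sqrt (A*B))^2 := by rw [hK_def]; ring
    have hAL0 : 0 ≤ A / L := div_nonneg hA0 hLpos.le
    have h2 : K^2 ≤ 2 * (A/L)^2 + 8 * (Real.sqrt (A*B))^2 := by
      rw [expand]
      exact aux_sq_sum (A/L) (Real.sqrt (A*B))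
    have h3 : K^2 ≤ 2 * A^2/L^2 + 8 * (A*B) := by
      rw [hsqAB] at h2
      calc K^2 ≤ 2 * (A/L)^2 + 8 * (A*B) := h2
        _ = 2 * A^2/L^2 + 8 * (A*B) := by rw [div_pow]; ring
    calc K^2 * A ≤ (2 * A^2/L^2 + 8 * (A*B)) * A :=
        mul_le_mul_of_nonneg_right h3 hA0
      _ = 2 * A^3 / L^2 + 8 * A^2 * B := by ring
  -- 8A²B ≤ D + 16A⁵
  have h8 : 8 * A^2 * B ≤ D + 16 * A^5 := by
    have hstep : 8 * A^2 * B ≤ 8 * A^2 * Real.sqrt (A * D) := by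
      have : (0:ℝ) ≤ 8 * A^2 := by positivity
      exact mul_le_mul_of_nonneg_left hBle this
    refine le_trans hstep ?_
    rw [Real.sqrt_mul hA0 D]
    have ha : Real.sqrt A ^ 2 = A := Real.sq_sqrt hA0
    have hd : Real.sqrt D ^ 2 = D := Real.sq_sqrt hD0
    set a := Real.sqrt A with ha_def
    set d := Real.sqrt D with hd_def
    rw [← ha, ← hd]
    exact aux_young a d
  -- final chain
  have hlast : 2 * A ^ 3 / L ^ 2 ≤ 16 / L ^ 2 * A ^ 3 := by
    have hL2 : (0:ℝ) < L ^ 2 := by positivity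
    have h : 2 * A ^ 3 ≤ 16 * A ^ 3 := by
      have h3 := pow_nonneg hA0 3
      linarith
    calc 2 * A ^ 3 / L ^ 2 ≤ 16 * A ^ 3 / L ^ 2 := by gcongr
      _ = 16 / L ^ 2 * A ^ 3 := by ring
  rw [hIgA, hIgD]
  calc Ig γ (fun x => (u x)^6) ≤ K^2 * A := h6
    _ ≤ 2*A^3/L^2 + 8*A^2*B := hKsq
    _ ≤ 2*A^3/L^2 + (D + 16*A^5) := by linarith
    _ ≤ D + 16*A^5 + 16/L^2*A^3 := by linarith
end
end

section
/- (Inequality (3.8) of Remark 3.6.) There exists a universal constant C > 0 such that for every smooth regular closed plane curve γ and every smooth 2π-periodic function u : ℝ → ℝ, ∫_γ u⁴ ds ≤ ∫_γ (∂ₛ u)² ds + C (∫_γ u² ds)³ + (C/L) (∫_γ u² ds)². -/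
open Real MeasureTheory

noncomputable section

/-- Cauchy–Schwarz for interval integrals of continuous functions. -/
lemma cs_aux {a b : ℝ} (hab : a ≤ b) {f h : ℝ → ℝ} (hf : Continuous f) (hh : Continuous h) :
    (∫ x in a..b, f x * h x) ^ 2 ≤ (∫ x in a..b, f x ^ 2) * (∫ x in a..b, h x ^ 2) := by
  set F := ∫ x in a..b, f x ^ 2 with hF
  set G := ∫ x in a..b, h x ^ 2 with hG
  set P := ∫ x in a..b, f x * h x with hP
  have key : ∀ t : ℝ, 0 ≤ F * (t * t) + (2 * P) * t + G := by
    intro t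
    have h2 : (0:ℝ) ≤ ∫ x in a..b, (t * f x + h x) ^ 2 :=
      intervalIntegral.integral_nonneg hab (fun x _ => sq_nonneg _)
    have h3 : (∫ x in a..b, (t * f x + h x) ^ 2)
        = (t * t) * F + (2 * t) * P + G := by
      have e : ∀ x, (t * f x + h x) ^ 2
          = (t * t) * f x ^ 2 + (2 * t) * (f x * h x) + h x ^ 2 := fun x => by ring
      simp_rw [e]
      rw [intervalIntegral.integral_add, intervalIntegral.integral_add,
        intervalIntegral.integral_const_mul, intervalIntegral.integral_const_mul]
      · exact (continuous_const.mul (hf.pow 2)).intervalIntegrable _ _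
      · exact (continuous_const.mul (hf.mul hh)).intervalIntegrable _ _
      · exact ((continuous_const.mul (hf.pow 2)).add (continuous_const.mul (hf.mul hh))).intervalIntegrable _ _
      · exact (hh.pow 2).intervalIntegrable _ _
    nlinarith [h2, h3]
  have hd := discrim_le_zero key
  rw [discrim] at hd
  nlinarith [hd]

/-- Inequality (3.8) of Remark 3.6:
`∫_γ u⁴ ds ≤ ∫_γ (∂ₛu)² ds + C (∫_γ u² ds)³ + (C/L) (∫_γ u² ds)²`. -/
theorem rem_3_6_fourth :
    ∃ C : ℝ, 0 < C ∧
      ∀ (γ : ℝ → E2), IsClosedCurve γ →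
      ∀ (u : ℝ → ℝ), ContDiff ℝ (⊤ : ℕ∞) u → Function.Periodic u (2 * π) →
        Ig γ (fun x => (u x) ^ 4)
          ≤ Ig γ (fun x => (aDn γ 1 u x) ^ 2)
            + C * (Ig γ (fun x => (u x) ^ 2)) ^ 3
            + C / len γ * (Ig γ (fun x => (u x) ^ 2)) ^ 2 := by
  refine ⟨1, one_pos, ?_⟩
  intro γ hγ u hu hup
  have hπ : (0:ℝ) < 2 * π := by positivity
  set g : ℝ → ℝ := fun x => ‖deriv γ x‖ with hgdef
  have hgc : Continuous g := (hγ.smooth.continuous_deriv (by simp)).norm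
  have hgpos : ∀ x, 0 < g x := fun x => norm_pos_iff.mpr (hγ.regular x)
  have huc : Continuous u := hu.continuous
  have hu'c : Continuous (deriv u) := hu.continuous_deriv (by simp)
  set Q := Ig γ (fun x => u x ^ 2) with hQdef
  set D := Ig γ (fun x => (aDn γ 1 u x) ^ 2) with hDdef
  set L := len γ with hLdef
  have hQeq : Q = ∫ x in (0:ℝ)..(2*π), u x ^ 2 * g x := rfl
  have hLeq : L = ∫ x in (0:ℝ)..(2*π), g x := by
    simp [hLdef, len, Ig, hgdef]
  have hL : 0 < L := by
    rw [hLeq]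
    exact intervalIntegral.intervalIntegral_pos_of_pos (hgc.intervalIntegrable _ _) hgpos hπ
  have hDeq : D = ∫ x in (0:ℝ)..(2*π), (deriv u x) ^ 2 / g x := by
    rw [hDdef]
    simp only [Ig, aDn, Function.iterate_one, aD, smul_eq_mul]
    apply intervalIntegral.integral_congr
    intro x _
    have := (hgpos x).ne'
    field_simp [hgdef]
    simp only [hgdef] at this ⊢
    exact mul_div_cancel_right₀ _ this
  have hQ0 : 0 ≤ Q := by
    rw [hQeq]
    exact intervalIntegral.integral_nonneg hπ.le
      (fun x _ => mul_nonneg (sq_nonneg _) (hgpos x).le)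
  have hD0 : 0 ≤ D := by
    rw [hDeq]
    exact intervalIntegral.integral_nonneg hπ.le
      (fun x _ => div_nonneg (sq_nonneg _) (hgpos x).le)
  -- A = ∫ |2 u u'|
  set A := ∫ x in (0:ℝ)..(2*π), |2 * u x * deriv u x| with hAdef
  have h2c : Continuous (fun x => 2 * u x * deriv u x) := (continuous_const.mul huc).mul hu'c
  have hA0 : 0 ≤ A :=
    intervalIntegral.integral_nonneg hπ.le (fun x _ => abs_nonneg _)
  -- derivative of u^2
  have hD2 : ∀ t, HasDerivAt (fun s => u s ^ 2) (2 * u t * deriv u t) t := by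
    intro t
    have := ((hu.differentiable (by simp) t).hasDerivAt.fun_pow 2)
    simpa [pow_one] using this
  -- key pointwise bound
  have hkey : ∀ x ∈ Set.Icc (0:ℝ) (2*π), ∀ y ∈ Set.Icc (0:ℝ) (2*π),
      u x ^ 2 ≤ u y ^ 2 + A := by
    intro x hx y hy
    have hftc : (∫ t in y..x, 2 * u t * deriv u t) = u x ^ 2 - u y ^ 2 :=
      intervalIntegral.integral_eq_sub_of_hasDerivAt (fun t _ => hD2 t)
        (h2c.intervalIntegrable _ _)
    have habs : (∫ t in y..x, 2 * u t * deriv u t) ≤ A := by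
      rcases le_total y x with hyx | hxy
      · calc (∫ t in y..x, 2 * u t * deriv u t)
            ≤ ∫ t in y..x, |2 * u t * deriv u t| :=
              intervalIntegral.integral_mono_on hyx (h2c.intervalIntegrable _ _)
                (h2c.abs.intervalIntegrable _ _) (fun t _ => le_abs_self _)
          _ ≤ A :=
              intervalIntegral.integral_mono_interval hy.1 hyx hx.2
                (Filter.Eventually.of_forall fun t => abs_nonneg _)
                (h2c.abs.intervalIntegrable _ _)
      · have h1 : (∫ t in y..x, 2 * u t * deriv u t)
            = -(∫ t in x..y, 2 * u t * deriv u t) :=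
          (intervalIntegral.integral_symm x y)
        have h2 : |∫ t in x..y, 2 * u t * deriv u t|
            ≤ ∫ t in x..y, |2 * u t * deriv u t| :=
          intervalIntegral.abs_integral_le_integral_abs hxy
        have h3 : (∫ t in x..y, |2 * u t * deriv u t|) ≤ A :=
          intervalIntegral.integral_mono_interval hx.1 hxy hy.2
            (Filter.Eventually.of_forall fun t => abs_nonneg _)
            (h2c.abs.intervalIntegrable _ _)
        rw [h1]
        have := neg_abs_le (∫ t in x..y, 2 * u t * deriv u t)
        linarith [neg_le_neg (le_abs_self (∫ t in x..y, 2 * u t * deriv u t)), h2, h3,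
          abs_nonneg (∫ t in x..y, 2 * u t * deriv u t)]
    linarith [hftc, habs]
  -- integrate in y: u x ^ 2 * L ≤ Q + A * L
  have hux : ∀ x ∈ Set.Icc (0:ℝ) (2*π), u x ^ 2 * L ≤ Q + A * L := by
    intro x hx
    have hmono : (∫ y in (0:ℝ)..(2*π), u x ^ 2 * g y)
        ≤ ∫ y in (0:ℝ)..(2*π), (u y ^ 2 + A) * g y := by
      apply intervalIntegral.integral_mono_on hπ.le
        ((continuous_const.mul hgc).intervalIntegrable _ _)
        ((((huc.pow 2).add continuous_const).mul hgc).intervalIntegrable _ _)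
      intro y hy
      exact mul_le_mul_of_nonneg_right (hkey x hx y hy) (hgpos y).le
    have hl : (∫ y in (0:ℝ)..(2*π), u x ^ 2 * g y) = u x ^ 2 * L := by
      rw [intervalIntegral.integral_const_mul, hLeq]
    have hr : (∫ y in (0:ℝ)..(2*π), (u y ^ 2 + A) * g y) = Q + A * L := by
      have e : ∀ y, (u y ^ 2 + A) * g y = u y ^ 2 * g y + A * g y := fun y => by ring
      simp_rw [e]
      rw [intervalIntegral.integral_add (f := fun y => u y ^ 2 * g y) (g := fun y => A * g y) (((huc.pow 2).mul hgc).intervalIntegrable _ _)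
        ((continuous_const.mul hgc).intervalIntegrable _ _),
        intervalIntegral.integral_const_mul, hLeq, hQeq]
    rw [hl] at hmono
    rw [hr] at hmono
    exact hmono
  -- Cauchy–Schwarz: A ^ 2 ≤ 4 * (Q * D)
  have hA2 : A ^ 2 ≤ 4 * (Q * D) := by
    set sg : ℝ → ℝ := fun x => Real.sqrt (g x) with hsgdef
    have hsgc : Continuous sg := Real.continuous_sqrt.comp hgc
    have hsgpos : ∀ x, 0 < sg x := fun x => Real.sqrt_pos.mpr (hgpos x)
    have hfc : Continuous (fun x => |u x| * sg x) := huc.abs.mul hsgc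
    have hhc : Continuous (fun x => |deriv u x| / sg x) :=
      hu'c.abs.div hsgc (fun x => (hsgpos x).ne')
    have hcs := cs_aux hπ.le hfc hhc
    have e1 : ∀ x, (|u x| * sg x) * (|deriv u x| / sg x) = |u x * deriv u x| := by
      intro x
      rw [abs_mul]
      field_simp [(hsgpos x).ne']
    have e2 : ∀ x, (|u x| * sg x) ^ 2 = u x ^ 2 * g x := by
      intro x
      rw [mul_pow, sq_abs, Real.sq_sqrt (hgpos x).le]
    have e3 : ∀ x, (|deriv u x| / sg x) ^ 2 = (deriv u x) ^ 2 / g x := by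
      intro x
      rw [div_pow, sq_abs, Real.sq_sqrt (hgpos x).le]
    simp_rw [e1, e2, e3] at hcs
    rw [← hQeq, ← hDeq] at hcs
    have eA : A = 2 * ∫ x in (0:ℝ)..(2*π), |u x * deriv u x| := by
      rw [hAdef, ← intervalIntegral.integral_const_mul]
      apply intervalIntegral.integral_congr
      intro x _
      show |2 * u x * deriv u x| = 2 * |u x * deriv u x|
      rw [show (2:ℝ) * u x * deriv u x = 2 * (u x * deriv u x) by ring, abs_mul, abs_two]
    rw [eA]
    nlinarith [hcs]
  -- final chain
  have hfinal : Ig γ (fun x => u x ^ 4) ≤ (Q / L + A) * Q := by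
    have hb : ∀ x ∈ Set.Icc (0:ℝ) (2*π), u x ^ 2 ≤ Q / L + A := by
      intro x hx
      rw [div_add' _ _ _ hL.ne', le_div_iff₀ hL]
      linarith [hux x hx]
    have : Ig γ (fun x => u x ^ 4)
        ≤ ∫ x in (0:ℝ)..(2*π), (Q / L + A) * (u x ^ 2 * g x) := by
      show (∫ x in (0:ℝ)..(2*π), u x ^ 4 * g x) ≤ _
      apply intervalIntegral.integral_mono_on hπ.le
        (((huc.pow 4).mul hgc).intervalIntegrable _ _)
        ((continuous_const.mul ((huc.pow 2).mul hgc)).intervalIntegrable _ _)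
      intro x hx
      have h1 : u x ^ 4 * g x = u x ^ 2 * (u x ^ 2 * g x) := by ring
      show u x ^ 4 * g x ≤ (Q / L + A) * (u x ^ 2 * g x)
      rw [h1]
      exact mul_le_mul_of_nonneg_right (hb x hx)
        (mul_nonneg (sq_nonneg _) (hgpos x).le)
    calc Ig γ (fun x => u x ^ 4)
        ≤ ∫ x in (0:ℝ)..(2*π), (Q / L + A) * (u x ^ 2 * g x) := this
      _ = (Q / L + A) * Q := by rw [intervalIntegral.integral_const_mul, ← hQeq]
  have hAQ : A * Q ≤ D + Q ^ 3 := by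
    have h1 : A ^ 2 * Q ^ 2 ≤ 4 * (Q * D) * Q ^ 2 :=
      mul_le_mul_of_nonneg_right hA2 (sq_nonneg Q)
    have h2 : (A * Q) ^ 2 ≤ (D + Q ^ 3) ^ 2 := by nlinarith [sq_nonneg (D - Q ^ 3)]
    exact (pow_le_pow_iff_left₀ (mul_nonneg hA0 hQ0)
      (add_nonneg hD0 (pow_nonneg hQ0 3)) two_ne_zero).mp h2
  have : (Q / L + A) * Q = Q ^ 2 / L + A * Q := by ring
  rw [this] at hfinal
  have hgoal : Q ^ 2 / L + A * Q ≤ D + 1 * Q ^ 3 + 1 / L * Q ^ 2 := by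
    have : Q ^ 2 / L = 1 / L * Q ^ 2 := by ring
    linarith [hAQ, this.le, this.ge]
  linarith [hfinal, hgoal]
end
end
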